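/- arXiv:2111.00761 — 11 statements merged into one kernel-verified Lean document; each statement's English description precedes it below -/
import Mathlib

section
/- Let R be an integrally closed integral domain. The following are equivalent: (1) every ideal of R is a big ideal (i.e. R is a big ideal domain); (2) every finitely generated ideal of R is a big ideal; (3) R is a Prüfer domain. -/
/-!
(3 ⇒ 1) If `J < I` but `J ^ n = I ^ n`, take `a ∈ I`. Then `a ^ n ∈ J₀ ^ n` for some finitely
generated `J₀ ≤ J`, so `L = J₀ + (a)` satisfies `L ^ n = J₀ * L ^ (n - 1)`; cancelling the
invertible `L ^ (n - 1)` gives `L = J₀`, hence `a ∈ J`.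

(2 ⇒ 3) For `a, b ∈ R` the ideals `J = (a⁴, a³b, ab³, b⁴) ≤ J + (a²b²)` have the same square, so
`a²b² ∈ J`: `θ = a / b` is a root of `rX⁴ + sX³ - X² + tX + u`. Integral closedness puts `rθ`,
`u / θ` and then `θ (rθ + s)` in `R`, and `(a, b) * (rθ + s, θ (rθ + s) - 1) = (b)`.
Invertibility of all two-generated ideals propagates to all finitely generated ones through
`(A + B) (A + C) (B + C) = (A + B + C) (AB + AC + BC)`.
-/

/-- An ideal `I` of a commutative ring `R` is a *big ideal* if whenever `J ⊊ I`,
`J ^ n ⊊ I ^ n` for every positive integer `n`. -/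
def Ideal.IsBig {R : Type*} [CommRing R] (I : Ideal R) : Prop :=
  ∀ J : Ideal R, J < I → ∀ n : ℕ, 1 ≤ n → J ^ n < I ^ n

/-- A commutative ring is a *big ideal ring* if every ideal is a big ideal. -/
def IsBigIdealRing (R : Type*) [CommRing R] : Prop :=
  ∀ I : Ideal R, I.IsBig

/-- An integral domain is a *Prüfer domain* if every nonzero finitely generated ideal
is invertible (as a fractional ideal). -/
def IsPruferDomain (R : Type*) [CommRing R] [IsDomain R] : Prop :=
  ∀ I : Ideal R, I.FG → I ≠ ⊥ →
    IsUnit (I : FractionalIdeal (nonZeroDivisors R) (FractionRing R))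

open Polynomial nonZeroDivisors

theorem add_mul_add_mul_add_eq {S : Type*} [IdemCommSemiring S] (a b c : S) :
    (a + b) * (a + c) * (b + c) = (a + b + c) * (a * b + a * c + b * c) := by
  have h₁ : (a + b) * (a + c) * (b + c) =
      a * a * b + a * a * c + a * c * c + a * b * b + b * b * c + b * c * c +
        (a * b * c + a * b * c) := by ring
  have h₂ : (a + b + c) * (a * b + a * c + b * c) =
      a * a * b + a * a * c + a * c * c + a * b * b + b * b * c + b * c * c +
        (a * b * c + (a * b * c + a * b * c)) := by ring
  rw [h₁, h₂, add_idem, add_idem]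

namespace Ideal

variable {R : Type*} [CommRing R]

theorem sup_pow_succ_le (P Q : Ideal R) (n : ℕ) :
    (P ⊔ Q) ^ (n + 1) ≤ P * (P ⊔ Q) ^ n ⊔ Q ^ (n + 1) := by
  induction n with
  | zero => simp
  | succ n ih =>
    calc (P ⊔ Q) ^ (n + 2) = P * (P ⊔ Q) ^ (n + 1) ⊔ Q * (P ⊔ Q) ^ (n + 1) := by
          rw [pow_succ' _ (n + 1), sup_mul]
    _ ≤ P * (P ⊔ Q) ^ (n + 1) ⊔ Q * (P * (P ⊔ Q) ^ n ⊔ Q ^ (n + 1)) :=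
          sup_le_sup_left (mul_mono_right ih) _
    _ = P * (P ⊔ Q) ^ (n + 1) ⊔ (P * (Q * (P ⊔ Q) ^ n) ⊔ Q ^ (n + 2)) := by
          rw [mul_sup, mul_left_comm, ← pow_succ']
    _ ≤ P * (P ⊔ Q) ^ (n + 1) ⊔ Q ^ (n + 2) := by
          refine sup_le le_sup_left (sup_le (le_sup_of_le_left (mul_mono_right ?_)) le_sup_right)
          rw [pow_succ']
          exact mul_mono_left le_sup_right

theorem exists_fg_le_mem_pow {J : Ideal R} {n : ℕ} {x : R} (hx : x ∈ J ^ n) :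
    ∃ J₀ ≤ J, J₀.FG ∧ x ∈ J₀ ^ n := by
  induction n generalizing x with
  | zero => exact ⟨⊥, bot_le, Submodule.fg_bot, by simp_all⟩
  | succ n ih =>
    rw [pow_succ] at hx
    refine Submodule.mul_induction_on hx (fun y hy z hz => ?_) (fun y z hy hz => ?_)
    · obtain ⟨J₀, hJ₀, hfg, hyJ₀⟩ := ih hy
      refine ⟨J₀ ⊔ span {z}, sup_le hJ₀ ((span_singleton_le_iff_mem _).2 hz),
        Submodule.FG.sup hfg (Submodule.fg_span_singleton z), ?_⟩
      rw [pow_succ]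
      exact mul_mem_mul (pow_right_mono le_sup_left n hyJ₀)
        (mem_sup_right (mem_span_singleton_self z))
    · obtain ⟨J₀, hJ₀, hfg₀, hy₀⟩ := hy
      obtain ⟨J₁, hJ₁, hfg₁, hz₁⟩ := hz
      exact ⟨J₀ ⊔ J₁, sup_le hJ₀ hJ₁, Submodule.FG.sup hfg₀ hfg₁,
        add_mem (pow_right_mono le_sup_left _ hy₀) (pow_right_mono le_sup_right _ hz₁)⟩

theorem span_pair_mul_span_pair_eq_span_singleton {a b p q y z : R} (hp : a * p = b * y)
    (hq : a * q = b * z) (hy : y = q + 1) : span {a, b} * span {p, q} = span {b} := by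
  refine le_antisymm (mul_le.2 ?_) ((span_singleton_le_iff_mem _).2 ?_)
  · rintro _ hx _ hx'
    obtain ⟨c, d, rfl⟩ := mem_span_pair.1 hx
    obtain ⟨e, f, rfl⟩ := mem_span_pair.1 hx'
    exact mem_span_singleton'.2 ⟨c * e * y + c * f * z + d * e * p + d * f * q, by
      linear_combination -(c * e) * hp - (c * f) * hq⟩
  · have hb : a * p - b * q = b := by linear_combination hp + b * hy
    have h := sub_mem (mul_mem_mul (subset_span (by simp)) (subset_span (by simp)) :
        a * p ∈ span {a, b} * span {p, q})
      (mul_mem_mul (subset_span (by simp)) (subset_span (by simp)) : b * q ∈ _)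
    rwa [hb] at h

theorem IsBig.mem_of_span_insert {S : Set R} {x : R} (hI : (span (insert x S)).IsBig)
    (hx : ∀ y ∈ insert x S, x * y ∈ span S ^ 2) : x ∈ span S := by
  by_contra hxS
  have hlt : span S < span (insert x S) :=
    lt_of_le_not_ge (span_mono (Set.subset_insert x S))
      fun h => hxS (h (subset_span (Set.mem_insert x S)))
  refine (hI _ hlt 2 one_le_two).not_ge ?_
  rw [sq, span_mul_span', span_le]
  rintro _ ⟨y, hy, z, hz, rfl⟩
  dsimp only
  rcases hy with rfl | hy
  · exact hx z hz
  rcases hz with rfl | hz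
  · rw [mul_comm]
    exact hx y (Set.mem_insert_of_mem _ hy)
  · exact sq (span S) ▸ mul_mem_mul (subset_span hy) (subset_span hz)

theorem sq_mul_sq_mem_span_of_forall_fg_isBig (h : ∀ I : Ideal R, I.FG → I.IsBig) (a b : R) :
    a ^ 2 * b ^ 2 ∈ span {a ^ 4, a ^ 3 * b, a * b ^ 3, b ^ 4} := by
  set S : Set R := {a ^ 4, a ^ 3 * b, a * b ^ 3, b ^ 4}
  have hS : ∀ y ∈ S, ∀ z ∈ S, y * z ∈ span S ^ 2 := fun y hy z hz =>
    sq (span S) ▸ mul_mem_mul (subset_span hy) (subset_span hz)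
  refine (h _ (Submodule.fg_span (Set.toFinite _))).mem_of_span_insert ?_
  rintro y (rfl | rfl | rfl | rfl | rfl)
  · convert hS (a ^ 3 * b) (by simp [S]) (a * b ^ 3) (by simp [S]) using 1; ring
  · convert hS (a ^ 3 * b) (by simp [S]) (a ^ 3 * b) (by simp [S]) using 1; ring
  · convert hS (a ^ 4) (by simp [S]) (a * b ^ 3) (by simp [S]) using 1; ring
  · convert hS (a ^ 3 * b) (by simp [S]) (b ^ 4) (by simp [S]) using 1; ring
  · convert hS (a * b ^ 3) (by simp [S]) (a * b ^ 3) (by simp [S]) using 1; ring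

end Ideal

theorem isIntegral_smul_div_of_quartic {R K : Type*} [CommRing R] [Field K] [Algebra R K]
    {a b : K} (hb : b ≠ 0) {r s t u : R}
    (h : a ^ 2 * b ^ 2 = r • a ^ 4 + s • (a ^ 3 * b) + t • (a * b ^ 3) + u • b ^ 4) :
    IsIntegral R (r • (a / b)) := by
  refine ⟨X ^ 4 + C s * X ^ 3 - C r * X ^ 2 + C (t * r ^ 2) * X + C (u * r ^ 3), by monicity!, ?_⟩
  simp only [Algebra.smul_def] at h ⊢
  simp only [map_mul, map_pow, eval₂_add, eval₂_sub, eval₂_X_pow, eval₂_mul, eval₂_C, eval₂_pow',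
    eval₂_X]
  field_simp
  linear_combination (-(algebraMap R K r) ^ 3) * h

theorem exists_span_pair_mul_eq_span_singleton_of_quartic {R : Type*} [CommRing R] [IsDomain R]
    [IsIntegrallyClosed R] {a b r s t u : R} (ha : a ≠ 0) (hb : b ≠ 0)
    (h : a ^ 2 * b ^ 2 = r * a ^ 4 + s * (a ^ 3 * b) + t * (a * b ^ 3) + u * b ^ 4) :
    ∃ p q : R, Ideal.span {a, b} * Ideal.span {p, q} = Ideal.span {b} := by
  set α := algebraMap R (FractionRing R) a
  set β := algebraMap R (FractionRing R) b
  have hα : α ≠ 0 := (map_ne_zero_iff _ (IsFractionRing.injective R _)).2 ha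
  have hβ : β ≠ 0 := (map_ne_zero_iff _ (IsFractionRing.injective R _)).2 hb
  have hrel : α ^ 2 * β ^ 2 = r • α ^ 4 + s • (α ^ 3 * β) + t • (α * β ^ 3) + u • β ^ 4 := by
    simp only [Algebra.smul_def, α, β, ← map_pow, ← map_mul, ← map_add, h]
  obtain ⟨p, hp⟩ := IsIntegrallyClosed.isIntegral_iff.1 (isIntegral_smul_div_of_quartic hβ hrel)
  obtain ⟨w, hw⟩ := IsIntegrallyClosed.isIntegral_iff.1
    (isIntegral_smul_div_of_quartic (a := β) (r := u) (s := t) (t := s) (u := r) hα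
      (by simp only [Algebra.smul_def] at hrel ⊢; linear_combination hrel))
  simp only [Algebra.smul_def] at hp hw hrel
  -- With `θ = α / β`, `p = rθ` and `w = u / θ`, the element `y = θ (rθ + s)` satisfies
  -- `y (y - 1) + (rθ + s) (u / θ + t) = (rθ + s) / θ * (rθ⁴ + sθ³ - θ² + tθ + u) = 0`.
  have hy : IsIntegral R (α / β * (algebraMap R _ p + algebraMap R _ s)) := by
    refine ⟨X ^ 2 - X + C ((p + s) * (w + t)), by monicity!, ?_⟩
    simp only [hp, map_mul, map_add, eval₂_add, eval₂_sub, eval₂_X_pow, eval₂_X, eval₂_mul,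
      eval₂_C, hw]
    field_simp
    linear_combination (-(α * algebraMap R _ r + β * algebraMap R _ s)) * hrel
  obtain ⟨y, hy⟩ := IsIntegrallyClosed.isIntegral_iff.1 hy
  have hpy : a * (p + s) = b * y := by
    apply IsFractionRing.injective R (FractionRing R)
    rw [map_mul, map_mul]
    change α * _ = β * _
    simp only [map_add, hp, hy]
    field_simp
  have hyw : a * (y - 1) = b * -(w + t) := by
    apply IsFractionRing.injective R (FractionRing R)
    rw [map_mul, map_mul]
    change α * _ = β * _
    simp only [map_add, map_sub, map_neg, map_one, hp, hy, hw]
    field_simp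
    linear_combination -hrel
  exact ⟨p + s, y - 1, Ideal.span_pair_mul_span_pair_eq_span_singleton hpy hyw (by ring)⟩

theorem isUnit_coeIdeal_sup_sup {R K : Type*} [CommRing R] [CommRing K] [Algebra R K]
    {S : Submonoid R} {A B C : Ideal R} (hAB : IsUnit ((A ⊔ B : Ideal R) : FractionalIdeal S K))
    (hAC : IsUnit ((A ⊔ C : Ideal R) : FractionalIdeal S K))
    (hBC : IsUnit ((B ⊔ C : Ideal R) : FractionalIdeal S K)) :
    IsUnit ((A ⊔ B ⊔ C : Ideal R) : FractionalIdeal S K) := by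
  have h := (hAB.mul hAC).mul hBC
  simp only [← FractionalIdeal.coeIdeal_mul, ← Submodule.add_eq_sup, add_mul_add_mul_add_eq] at h
  rw [FractionalIdeal.coeIdeal_mul] at h
  exact isUnit_of_mul_isUnit_left h

section FractionalIdeal

open Ideal

variable {R K : Type*} [CommRing R] [Field K] [Algebra R K] [IsFractionRing R K]

theorem isUnit_coeIdeal_of_mul_eq_span_singleton [IsDomain R] {I J : Ideal R} {b : R}
    (hb : b ≠ 0) (h : I * J = span {b}) : IsUnit (I : FractionalIdeal R⁰ K) := by
  have hunit : IsUnit ((I * J : Ideal R) : FractionalIdeal R⁰ K) :=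
    h ▸ IsUnit.of_mul_eq_one _ (FractionalIdeal.coe_ideal_span_singleton_mul_inv K hb)
  rw [FractionalIdeal.coeIdeal_mul] at hunit
  exact isUnit_of_mul_isUnit_left hunit

theorem isUnit_coeIdeal_of_fg_of_isUnit_span_pair
    (hpair : ∀ a b : R, b ≠ 0 → IsUnit (span {a, b} : FractionalIdeal R⁰ K))
    {I : Ideal R} (hI : I.FG) (hI0 : I ≠ ⊥) : IsUnit (I : FractionalIdeal R⁰ K) := by
  classical
  have hinsert (T : Finset R) :
      ∀ x ≠ 0, IsUnit ((span (insert x (T : Set R)) : Ideal R) : FractionalIdeal R⁰ K) := by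
    induction T using Finset.induction_on with
    | empty => intro x hx; simpa using hpair x x hx
    | insert b T _ ih =>
      intro a ha
      rcases eq_or_ne b 0 with rfl | hb
      · simpa [Set.insert_comm a 0] using ih a ha
      rw [Finset.coe_insert, span_insert, span_insert, ← sup_assoc]
      refine isUnit_coeIdeal_sup_sup ?_ ?_ ?_
      · rw [← span_insert]; exact hpair a b hb
      · rw [← span_insert]; exact ih a ha
      · rw [← span_insert]; exact ih b hb
  obtain ⟨T, rfl⟩ := hI
  obtain ⟨x, hxT, hx0⟩ : ∃ x ∈ T, x ≠ 0 := by
    by_contra! hT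
    exact hI0 (span_eq_bot.2 hT)
  simpa [Set.insert_eq_of_mem (Finset.mem_coe.2 hxT)] using hinsert T x hx0

theorem Ideal.mem_of_pow_mem_pow_of_isUnit {J : Ideal R} {a : R} {n : ℕ}
    (hL : IsUnit ((J ⊔ span {a} : Ideal R) : FractionalIdeal R⁰ K))
    (ha : a ^ (n + 1) ∈ J ^ (n + 1)) : a ∈ J := by
  set L := J ⊔ span {a}
  have hpow : L ^ (n + 1) = J * L ^ n := by
    refine le_antisymm ((sup_pow_succ_le J _ n).trans (sup_le le_rfl ?_))
      (pow_succ' L n ▸ mul_mono_left le_sup_left)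
    rw [span_singleton_pow, span_singleton_le_iff_mem]
    exact ((pow_succ' J n).le.trans (mul_mono_right (pow_right_mono le_sup_left n))) ha
  have hcoe : (L : FractionalIdeal R⁰ K) * L ^ n = J * L ^ n := by
    rw [← pow_succ', ← FractionalIdeal.coeIdeal_pow, hpow, FractionalIdeal.coeIdeal_mul,
      FractionalIdeal.coeIdeal_pow]
  have hLJ : L = J := FractionalIdeal.coeIdeal_injective ((hL.pow n).mul_right_cancel hcoe)
  exact hLJ ▸ mem_sup_right (mem_span_singleton_self a)

theorem isUnit_span_pair_of_sq_mul_sq_mem [IsDomain R] [IsIntegrallyClosed R] {a b : R}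
    (hb : b ≠ 0) (h : a ^ 2 * b ^ 2 ∈ span {a ^ 4, a ^ 3 * b, a * b ^ 3, b ^ 4}) :
    IsUnit (span {a, b} : FractionalIdeal R⁰ K) := by
  rcases eq_or_ne a 0 with rfl | ha
  · rw [span_insert_zero]
    exact isUnit_coeIdeal_of_mul_eq_span_singleton hb (mul_top _)
  obtain ⟨r, _, h₁, he₁⟩ := mem_span_insert.1 h
  obtain ⟨s, _, h₂, he₂⟩ := mem_span_insert.1 h₁
  obtain ⟨t, _, h₃, he₃⟩ := mem_span_insert.1 h₂
  obtain ⟨u, rfl⟩ := mem_span_singleton.1 h₃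
  have hquartic : a ^ 2 * b ^ 2 = r * a ^ 4 + s * (a ^ 3 * b) + t * (a * b ^ 3) + u * b ^ 4 := by
    rw [he₁, he₂, he₃]
    ring
  obtain ⟨p, q, hpq⟩ := exists_span_pair_mul_eq_span_singleton_of_quartic ha hb hquartic
  exact isUnit_coeIdeal_of_mul_eq_span_singleton hb hpq

end FractionalIdeal

section Prufer

open Ideal

variable {R : Type*} [CommRing R] [IsDomain R]

theorem IsPruferDomain.isBigIdealRing (hR : IsPruferDomain R) : IsBigIdealRing R := by
  intro I J hJI n hn
  refine lt_of_le_of_ne (pow_right_mono hJI.le n) fun hpow => hJI.not_ge fun a ha => ?_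
  obtain ⟨m, rfl⟩ := Nat.exists_eq_add_of_le' hn
  obtain ⟨J₀, hJ₀, hfg, haJ₀⟩ := exists_fg_le_mem_pow (hpow ▸ pow_mem_pow ha (m + 1))
  rcases eq_or_ne a 0 with rfl | ha0
  · exact J.zero_mem
  have hne : J₀ ⊔ span {a} ≠ ⊥ := fun h =>
    ha0 (eq_bot_iff.1 h (mem_sup_right (mem_span_singleton_self a)))
  exact hJ₀ (mem_of_pow_mem_pow_of_isUnit
    (hR _ (Submodule.FG.sup hfg (Submodule.fg_span_singleton a)) hne) haJ₀)

theorem isPruferDomain_of_forall_fg_isBig [IsIntegrallyClosed R]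
    (h : ∀ I : Ideal R, I.FG → I.IsBig) : IsPruferDomain R := fun _ hI hI0 =>
  isUnit_coeIdeal_of_fg_of_isUnit_span_pair
    (fun _ _ hb =>
      isUnit_span_pair_of_sq_mul_sq_mem hb (sq_mul_sq_mem_span_of_forall_fg_isBig h _ _))
    hI hI0

end Prufer

/-- **Theorem 2.7.** For an integrally closed domain `R`, the following are equivalent:
(1) `R` is a big ideal domain; (2) every finitely generated ideal of `R` is a big ideal;
(3) `R` is a Prüfer domain. -/
theorem bigIdealRing_tfae_of_integrallyClosed (R : Type*) [CommRing R] [IsDomain R]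
    [IsIntegrallyClosed R] :
    List.TFAE [IsBigIdealRing R,
      ∀ I : Ideal R, I.FG → I.IsBig,
      IsPruferDomain R] := by
  tfae_have 1 → 2 := fun h I _ => h I
  tfae_have 2 → 3 := isPruferDomain_of_forall_fg_isBig
  tfae_have 3 → 1 := IsPruferDomain.isBigIdealRing
  tfae_finish
end

section
/- Let R be an integral domain and T an overring of R (a ring with R ⊆ T ⊆ qf(R)) such that the conductor (R : T) = {x ∈ R : xT ⊆ R} is nonzero. If R is a big ideal domain, then T is a big ideal domain. -/
set_option maxHeartbeats 1000000 in
set_option synthInstance.maxHeartbeats 1000000 in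
/-- **Remark 2.8.** Let `R` be an integral domain and `T` an overring of `R`
(a subring of the quotient field of `R` containing `R`) whose conductor
`(R : T) = {x ∈ R : xT ⊆ R}` is nonzero.  If `R` is a big ideal domain,
then so is `T`. -/
theorem isBigIdealRing_overring (R : Type*) [CommRing R] [IsDomain R]
    (T : Subalgebra R (FractionRing R))
    (hcond : ∃ r : R, r ≠ 0 ∧ ∀ t ∈ T,
      algebraMap R (FractionRing R) r * t ∈ (algebraMap R (FractionRing R)).range)
    (hR : IsBigIdealRing R) :
    IsBigIdealRing T := by
  classical
  obtain ⟨r, hr0, hrT⟩ := hcond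
  set f : R →+* FractionRing R := algebraMap R (FractionRing R) with hf_def
  have hf : Function.Injective f := IsFractionRing.injective R (FractionRing R)
  have hfr : f r ≠ 0 := fun h => hr0 (hf (by simp [h]))
  set ι : ↥T →ₐ[R] FractionRing R := T.val with hι_def
  set ρ : R →ₐ[R] FractionRing R := Algebra.ofId R (FractionRing R) with hρ_def
  have hρf : ∀ x : R, ρ x = f x := fun x => rfl
  have hρinj : Function.Injective ρ.toLinearMap := hf
  -- the map sending an ideal of T to an R-submodule of K
  set N : Ideal ↥T → Submodule R (FractionRing R) :=
    fun A => Submodule.map ι.toLinearMap (Submodule.restrictScalars R A) with hN_def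
  have hNmul : ∀ A B : Ideal ↥T, N (A * B) = N A * N B := by
    intro A B
    show Submodule.map ι.toLinearMap (Submodule.restrictScalars R (A * B)) = _
    rw [Submodule.restrictScalars_mul, Submodule.map_mul]
  have hNmono : Monotone N := fun A B h =>
    Submodule.map_mono (fun x hx => h hx)
  have hNinj : Function.Injective N := by
    intro A B h
    have h1 : Submodule.restrictScalars R A = Submodule.restrictScalars R B :=
      Submodule.map_injective_of_injective (f := ι.toLinearMap) Subtype.val_injective h
    exact Submodule.restrictScalars_injective R _ _ h1
  have hNpow : ∀ (A : Ideal ↥T) (n : ℕ), 1 ≤ n → N (A ^ n) = (N A) ^ n := by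
    intro A n hn
    induction n with
    | zero => omega
    | succ m ih =>
      rcases Nat.eq_or_lt_of_le hn with h1 | h1
      · simp [← h1]
      · have hm : 1 ≤ m := by omega
        rw [pow_succ, hNmul, ih hm, ← pow_succ]
  -- the ideal of R associated to an ideal of T
  set ψ : Ideal ↥T → Ideal R :=
    fun A => Submodule.comap ρ.toLinearMap (Submodule.span R {f r} * N A) with hψ_def
  have hsub : ∀ A : Ideal ↥T, Submodule.span R {f r} * N A ≤ LinearMap.range ρ.toLinearMap := by
    intro A
    refine Submodule.mul_le.mpr ?_
    intro m hm p hp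
    obtain ⟨a, rfl⟩ := Submodule.mem_span_singleton.mp hm
    obtain ⟨t, ht, rfl⟩ := Submodule.mem_map.mp hp
    obtain ⟨s, hs⟩ := hrT (t : FractionRing R) t.2
    refine ⟨a * s, ?_⟩
    show f (a * s) = (a • f r) * (t : FractionRing R)
    rw [map_mul, hs, Algebra.smul_def]
    ring
  have hmap : ∀ A : Ideal ↥T,
      Submodule.map ρ.toLinearMap (ψ A) = Submodule.span R {f r} * N A := by
    intro A
    exact Submodule.map_comap_eq_self (hsub A)
  have hψmono : ∀ {A B : Ideal ↥T}, A ≤ B → ψ A ≤ ψ B := by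
    intro A B h
    exact Submodule.comap_mono (mul_le_mul' le_rfl (hNmono h))
  have hψinj : Function.Injective ψ := by
    intro A B h
    apply hNinj
    have h2 : Submodule.span R {f r} * N A = Submodule.span R {f r} * N B := by
      rw [← hmap A, ← hmap B, h]
    -- cancel the factor span {f r}
    ext x
    constructor
    · intro hx
      have : f r * x ∈ Submodule.span R {f r} * N A :=
        Submodule.mul_mem_mul (Submodule.mem_span_singleton_self _) hx
      rw [h2] at this
      obtain ⟨z, hz, hzx⟩ := Submodule.mem_span_singleton_mul.mp this
      rwa [← mul_left_cancel₀ hfr hzx]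
    · intro hx
      have : f r * x ∈ Submodule.span R {f r} * N B :=
        Submodule.mul_mem_mul (Submodule.mem_span_singleton_self _) hx
      rw [← h2] at this
      obtain ⟨z, hz, hzx⟩ := Submodule.mem_span_singleton_mul.mp this
      rwa [← mul_left_cancel₀ hfr hzx]
  -- main argument
  intro I J hJI n hn
  refine lt_of_le_of_ne (Ideal.pow_right_mono hJI.le n) ?_
  intro heq
  have hlt : ψ J < ψ I := lt_of_le_of_ne (hψmono hJI.le) (fun h => hJI.ne (hψinj h))
  have hpow : (ψ J) ^ n = (ψ I) ^ n := by
    apply Submodule.map_injective_of_injective hρinj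
    have e1 : Submodule.map ρ.toLinearMap ((ψ J) ^ n) = (Submodule.span R {f r}) ^ n * (N J) ^ n := by
      rw [Submodule.map_pow, hmap J, mul_pow]
    have e2 : Submodule.map ρ.toLinearMap ((ψ I) ^ n) = (Submodule.span R {f r}) ^ n * (N I) ^ n := by
      rw [Submodule.map_pow, hmap I, mul_pow]
    rw [e1, e2, ← hNpow J n hn, ← hNpow I n hn, heq]
  exact (hR (ψ I) (ψ J) hlt n hn).ne hpow
end

section
/- Let R be an integral domain and X an indeterminate over R. Then the polynomial ring R[X] is a big ideal domain if and only if R is a field. -/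
/-!
Over a field, `R[X]` is a principal ideal domain, and every principal ideal `(f)` of a domain is
big: an ideal `J ⊆ (f)` is `f K` with `K = J : (f)`, and `J ^ n = (f) ^ n` cancels to `K ^ n = R`,
whence `K = R` and `J = (f)`.

Conversely, for `b, x` in any commutative ring let `J = (b⁴, b³x, bx³, x⁴)` and `m = b²x²`. Then
`mJ ⊆ J²` and `m² ∈ J²`, so `(J + (m))² = J²`; if `J + (m)` is big this forces
`m ∈ J ⊆ (b³, x³)`. For `b = a` a nonzero constant and `x = X`, comparing coefficients of `X²`
gives `a² ∈ a³R`, so `a` is a unit.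
-/

open Polynomial

namespace Ideal

variable {R : Type*} [CommRing R]

theorem IsBig.eq_of_le_of_pow_le {I J : Ideal R} (hI : I.IsBig) (hJI : J ≤ I) {n : ℕ}
    (hn : 1 ≤ n) (h : I ^ n ≤ J ^ n) : J = I :=
  by_contra fun hne => (hI J (lt_of_le_of_ne hJI hne) n hn).not_ge h

theorem eq_span_singleton_mul_colon {J : Ideal R} {f : R} (hJ : J ≤ span {f}) :
    J = span {f} * J.colon (span {f}) := by
  refine (eq_span_singleton_mul _ _).mpr ⟨fun z hz => ?_, fun z hz => ?_⟩
  · obtain ⟨y, rfl⟩ := mem_span_singleton'.mp (hJ hz)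
    exact ⟨y, mem_colon_span_singleton.mpr hz, mul_comm _ _⟩
  · exact mul_comm f z ▸ mem_colon_span_singleton.mp hz

theorem isBig_span_singleton [IsDomain R] (f : R) : (span {f} : Ideal R).IsBig := by
  intro J hJ n hn
  have hf : f ≠ 0 := by
    rintro rfl
    simp at hJ
  set K := J.colon (span {f})
  have hJK : J = span {f} * K := eq_span_singleton_mul_colon hJ.le
  have hK : K ≠ ⊤ := fun hK => hJ.ne (by rw [hJK, hK, mul_top])
  refine lt_of_le_of_ne (pow_right_mono hJ.le n) fun h => hK ?_
  rw [hJK, mul_pow, span_singleton_pow, ← mul_top (span {f ^ n}), mul_assoc, top_mul,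
    span_singleton_mul_right_inj (pow_ne_zero n hf)] at h
  exact (pow_eq_top_iff.mp h).resolve_right (by omega)

theorem sq_sup_span_singleton_eq_sq {J : Ideal R} {m : R} (hmJ : span {m} * J ≤ J ^ 2)
    (hm : m ^ 2 ∈ J ^ 2) : (J ⊔ span {m}) ^ 2 = J ^ 2 := by
  refine le_antisymm ?_ (pow_right_mono le_sup_left 2)
  rw [sq, sup_mul, mul_sup, mul_sup, ← sq J, mul_comm J, span_singleton_mul_span_singleton,
    ← sq m]
  exact sup_le (sup_le le_rfl hmJ) (sup_le hmJ ((span_singleton_le_iff_mem _).mpr hm))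

end Ideal

open Ideal in
theorem IsBigIdealRing.sq_mul_sq_mem_span_pow_three {R : Type*} [CommRing R]
    (h : IsBigIdealRing R) (b x : R) : b ^ 2 * x ^ 2 ∈ span {b ^ 3, x ^ 3} := by
  set S : Set R := {b ^ 4, b ^ 3 * x, b * x ^ 3, x ^ 4}
  have mem_sq {u v w : R} (hu : u ∈ S) (hv : v ∈ S) (huv : w = u * v) : w ∈ span S ^ 2 :=
    huv ▸ sq (span S) ▸ mul_mem_mul (subset_span hu) (subset_span hv)
  have hmJ : span {b ^ 2 * x ^ 2} * span S ≤ span S ^ 2 := by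
    simp only [span_mul_span', Set.singleton_mul, span_le, S, Set.image_insert_eq,
      Set.image_singleton, Set.insert_subset_iff, Set.singleton_subset_iff, SetLike.mem_coe]
    refine ⟨mem_sq (u := b ^ 3 * x) (v := b ^ 3 * x) (by simp [S]) (by simp [S]) (by ring),
      mem_sq (u := b ^ 4) (v := b * x ^ 3) (by simp [S]) (by simp [S]) (by ring),
      mem_sq (u := b ^ 3 * x) (v := x ^ 4) (by simp [S]) (by simp [S]) (by ring),
      mem_sq (u := b * x ^ 3) (v := b * x ^ 3) (by simp [S]) (by simp [S]) (by ring)⟩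
  have hm : (b ^ 2 * x ^ 2) ^ 2 ∈ span S ^ 2 :=
    mem_sq (u := b ^ 4) (v := x ^ 4) (by simp [S]) (by simp [S]) (by ring)
  have hJ : span S ⊔ span {b ^ 2 * x ^ 2} = span S :=
    (h _ |>.eq_of_le_of_pow_le le_sup_left one_le_two
      (sq_sup_span_singleton_eq_sq hmJ hm).le).symm
  have hJ_le : span S ≤ span {b ^ 3, x ^ 3} := by
    simp only [span_le, S, Set.insert_subset_iff, Set.singleton_subset_iff, SetLike.mem_coe,
      mem_span_pair]
    exact ⟨⟨b, 0, by ring⟩, ⟨x, 0, by ring⟩, ⟨0, b, by ring⟩, ⟨0, x, by ring⟩⟩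
  exact hJ_le (hJ ▸ mem_sup_right (mem_span_singleton_self _))

theorem Polynomial.isUnit_of_C_sq_mul_X_sq_mem_span {R : Type*} [CommRing R] [IsDomain R] {a : R}
    (ha : a ≠ 0) (h : C a ^ 2 * X ^ 2 ∈ Ideal.span {C a ^ 3, (X : R[X]) ^ 3}) : IsUnit a := by
  obtain ⟨f, g, hfg⟩ := Ideal.mem_span_pair.mp h
  rw [← C_pow, ← C_pow] at hfg
  have hcoeff := congrArg (coeff · 2) hfg
  rw [coeff_add, coeff_mul_C, coeff_C_mul_X_pow, coeff_mul_X_pow', if_neg (by norm_num),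
    if_pos rfl, add_zero] at hcoeff
  refine IsUnit.of_mul_eq_one (f.coeff 2) (mul_left_cancel₀ (pow_ne_zero 2 ha) ?_)
  linear_combination hcoeff

theorem isBigIdealRing_of_isPrincipalIdealRing (R : Type*) [CommRing R] [IsDomain R]
    [IsPrincipalIdealRing R] : IsBigIdealRing R := fun I => by
  obtain ⟨f, rfl⟩ := IsPrincipalIdealRing.principal I
  exact Ideal.isBig_span_singleton f

/-- **Theorem 2.11 (polynomial case).** Let `R` be an integral domain and `X` an
indeterminate over `R`.  Then `R[X]` is a big ideal domain if and only if `R` is a field. -/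
theorem isBigIdealRing_polynomial_iff_isField (R : Type*) [CommRing R] [IsDomain R] :
    IsBigIdealRing (Polynomial R) ↔ IsField R := by
  refine ⟨fun h => ⟨exists_pair_ne R, mul_comm, fun ha => ?_⟩, fun hR => ?_⟩
  · exact (isUnit_of_C_sq_mul_X_sq_mem_span ha
      (h.sq_mul_sq_mem_span_pow_three _ _)).exists_right_inv
  · let := hR.toField
    exact isBigIdealRing_of_isPrincipalIdealRing R[X]
end

section
/- Every stable integral domain is a big ideal domain. That is, if R is an integral domain in which every nonzero ideal I is invertible as an ideal of its endomorphism ring T = (I : I) (meaning I·(T : I) = T), then for all ideals I ⊊ J of R and every n ≥ 1 one has I^n ⊊ J^n. -/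
open scoped nonZeroDivisors

namespace FractionalIdeal

variable {R : Type*} [CommRing R] [IsDomain R] {K : Type*} [Field K] [Algebra R K]
  [IsFractionRing R K] {A B : FractionalIdeal R⁰ K} {n : ℕ}

def IsStable (A : FractionalIdeal R⁰ K) : Prop :=
  A * (A / A / A) = A / A

theorem one_le_div_self (hA : A ≠ 0) : 1 ≤ A / A :=
  (le_div_iff_mul_le hA).mpr (one_mul A).le

theorem div_self_mul_le (hA : A ≠ 0) : A / A * A ≤ A :=
  (le_div_iff_mul_le hA).mp le_rfl

theorem isIdempotentElem_div_self (hA : A ≠ 0) : IsIdempotentElem (A / A) := by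
  refine le_antisymm ((le_div_iff_mul_le hA).mpr ?_) (le_mul_of_one_le_left' (one_le_div_self hA))
  rw [mul_assoc]
  exact (mul_le_mul_right (div_self_mul_le hA) _).trans (div_self_mul_le hA)

theorem div_self_mul_pow_le (hA : A ≠ 0) (hn : n ≠ 0) : A / A * A ^ n ≤ A ^ n := by
  obtain ⟨m, rfl⟩ := Nat.exists_eq_add_one_of_ne_zero hn
  rw [pow_succ', ← mul_assoc]
  exact mul_le_mul_left (div_self_mul_le hA) _

namespace IsStable

theorem pow_mul_pow (h : A.IsStable) (hA : A ≠ 0) (hn : n ≠ 0) :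
    A ^ n * (A / A / A) ^ n = A / A := by
  rw [← mul_pow, h, (isIdempotentElem_div_self hA).pow_eq hn]

theorem le_div_self_of_mul_pow_le (h : A.IsStable) (hA : A ≠ 0) (hn : n ≠ 0)
    {C : FractionalIdeal R⁰ K} (hC : C * A ^ n ≤ A ^ n) : C ≤ A / A :=
  calc C ≤ C * (A / A) := le_mul_of_one_le_right' (one_le_div_self hA)
    _ = C * A ^ n * (A / A / A) ^ n := by rw [mul_assoc, h.pow_mul_pow hA hn]
    _ ≤ A ^ n * (A / A / A) ^ n := mul_le_mul_left hC _
    _ = A / A := h.pow_mul_pow hA hn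

theorem div_self_le_div_self_of_pow_eq (hB : B.IsStable) (hA : A ≠ 0) (hB0 : B ≠ 0)
    (hn : n ≠ 0) (hpow : A ^ n = B ^ n) : A / A ≤ B / B :=
  hB.le_div_self_of_mul_pow_le hB0 hn (hpow ▸ div_self_mul_pow_le hA hn)

theorem le_mul_div_self_of_le_of_pow_eq (h : A.IsStable) (hA : A ≠ 0) (hBA : B ≤ A)
    (hn : n ≠ 0) (hpow : B ^ n = A ^ n) : A ≤ B * (A / A) := by
  obtain ⟨m, rfl⟩ := Nat.exists_eq_add_one_of_ne_zero hn
  calc A ≤ A / A * A := le_mul_of_one_le_left' (one_le_div_self hA)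
    _ = B ^ (m + 1) * (A / A / A) ^ (m + 1) * A := by rw [hpow, h.pow_mul_pow hA hn]
    _ = B * ((B * (A / A / A)) ^ m * (A * (A / A / A))) := by ring
    _ ≤ B * ((A * (A / A / A)) ^ m * (A * (A / A / A))) := by gcongr
    _ = B * (A / A) := by rw [h, ← pow_succ, (isIdempotentElem_div_self hA).pow_succ_eq]

theorem eq_of_le_of_pow_eq (hA : A.IsStable) (hB : B.IsStable) (hA0 : A ≠ 0) (hB0 : B ≠ 0)
    (hBA : B ≤ A) (hn : n ≠ 0) (hpow : B ^ n = A ^ n) : B = A := by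
  refine le_antisymm hBA ?_
  calc A ≤ B * (A / A) := hA.le_mul_div_self_of_le_of_pow_eq hA0 hBA hn hpow
    _ ≤ B * (B / B) := by grw [hB.div_self_le_div_self_of_pow_eq hA0 hB0 hn hpow.symm]
    _ ≤ B := mul_comm B (B / B) ▸ div_self_mul_le hB0

end IsStable

end FractionalIdeal

open FractionalIdeal in
/-- **Proposition 2.12.** Every stable domain is a big ideal domain: if every nonzero
ideal `I` of the domain `R` is invertible in its endomorphism ring `T = (I : I)`,
i.e. `I · (T : I) = T` (as fractional ideals, `T = I / I` and `(T : I) = T / I`),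
then `R` is a big ideal domain. -/
theorem isBigIdealRing_of_stable (R : Type*) [CommRing R] [IsDomain R]
    (hstable : ∀ I : Ideal R, I ≠ ⊥ →
      (I : FractionalIdeal (nonZeroDivisors R) (FractionRing R)) *
          (((I : FractionalIdeal (nonZeroDivisors R) (FractionRing R)) / I) / I)
        = (I : FractionalIdeal (nonZeroDivisors R) (FractionRing R)) / I) :
    IsBigIdealRing R := by
  intro I J hJI n hn
  refine (Ideal.pow_right_mono hJI.le n).lt_of_ne fun hpow => hJI.ne ?_
  have hn0 : n ≠ 0 := Nat.one_le_iff_ne_zero.mp hn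
  have hI : I ≠ ⊥ := ne_bot_of_gt hJI
  have hJ : J ≠ ⊥ := fun hJ => hI <| (Ideal.pow_eq_bot hn0).mp <| by
    rw [← hpow, hJ, Ideal.pow_eq_bot hn0]
  rw [← coeIdeal_inj (K := FractionRing R)]
  exact IsStable.eq_of_le_of_pow_eq (hstable I hI) (hstable J hJ) (coeIdeal_ne_zero.mpr hI)
    (coeIdeal_ne_zero.mpr hJ) ((coeIdeal_le_coeIdeal _).mpr hJI.le) hn0
    (by rw [← coeIdeal_pow, ← coeIdeal_pow, hpow])
end

section
/- Let R be an integral domain, I a nonzero ideal of R, T = (I : I), and assume I is strongly stable, i.e. I = aT for some a ∈ I. Then I is a big ideal of R if and only if for every R-submodule W of T with W ⊊ T, one has W^n ⊊ T for every n ≥ 2 (where W^n denotes the R-submodule of T generated by all products of n elements of W). -/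
open nonZeroDivisors

namespace FractionalIdeal

section SpanSingleton

variable {R K : Type*} [CommRing R] [Field K] [Algebra R K] {S : Submonoid R}
  [IsLocalization S K]

theorem isUnit_spanSingleton {x : K} (hx : x ≠ 0) : IsUnit (spanSingleton S x) :=
  IsUnit.of_mul_eq_one (spanSingleton S x⁻¹) <| by
    rw [spanSingleton_mul_spanSingleton, mul_inv_cancel₀ hx, spanSingleton_one]

theorem spanSingleton_mul_lt_spanSingleton_mul_iff {x : K} (hx : x ≠ 0)
    {X Y : FractionalIdeal S K} : spanSingleton S x * X < spanSingleton S x * Y ↔ X < Y := by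
  simp only [lt_iff_le_not_ge, (isUnit_spanSingleton hx).mul_le_mul_left]

end SpanSingleton

variable {R K : Type*} [CommRing R] [Field K] [Algebra R K] [IsFractionRing R K]

theorem coeIdeal_lt_coeIdeal {I J : Ideal R} :
    (I : FractionalIdeal R⁰ K) < J ↔ I < J := by
  simp only [lt_iff_le_not_ge, coeIdeal_le_coeIdeal]

theorem pow_lt_pow_iff_of_coeIdeal_eq_spanSingleton_mul {x : K} (hx : x ≠ 0)
    {I J : Ideal R} {T X : FractionalIdeal R⁰ K} (hT : IsIdempotentElem T)
    (hI : (I : FractionalIdeal R⁰ K) = spanSingleton R⁰ x * T)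
    (hJ : (J : FractionalIdeal R⁰ K) = spanSingleton R⁰ x * X) {n : ℕ} (hn : n ≠ 0) :
    J ^ n < I ^ n ↔ X ^ n < T := by
  rw [← coeIdeal_lt_coeIdeal (K := K), coeIdeal_pow, coeIdeal_pow, hI, hJ, mul_pow, mul_pow,
    spanSingleton_pow, hT.pow_eq hn,
    spanSingleton_mul_lt_spanSingleton_mul_iff (pow_ne_zero n hx)]

variable [IsDomain R]

theorem isIdempotentElem_div_self_s8 {I : FractionalIdeal R⁰ K} (hI : I ≠ 0) :
    IsIdempotentElem (I / I) := by
  have hmul : I / I * I ≤ I := (le_div_iff_mul_le hI).mp le_rfl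
  refine le_antisymm ?_ ?_
  · rw [le_div_iff_mul_le hI, mul_assoc]
    exact (mul_le_mul_right hmul _).trans hmul
  · calc I / I = I / I * 1 := (mul_one _).symm
      _ ≤ I / I * (I / I) := mul_le_mul_right (by rw [le_div_iff_mul_le hI, one_mul]) _

end FractionalIdeal

open FractionalIdeal

theorem isBig_iff_of_stronglyStable_general (R : Type*) [CommRing R] [IsDomain R]
    (I : Ideal R) (hI : I ≠ ⊥) (a : R)
    (hss : FractionalIdeal.spanSingleton (nonZeroDivisors R)
          (algebraMap R (FractionRing R) a) *
        ((I : FractionalIdeal (nonZeroDivisors R) (FractionRing R)) / I)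
      = (I : FractionalIdeal (nonZeroDivisors R) (FractionRing R))) :
    I.IsBig ↔ ∀ W : Submodule R (FractionRing R),
      W < (((I : FractionalIdeal (nonZeroDivisors R) (FractionRing R)) / I :
          FractionalIdeal (nonZeroDivisors R) (FractionRing R)) :
        Submodule R (FractionRing R)) →
      ∀ n : ℕ, 2 ≤ n →
        W ^ n < (((I : FractionalIdeal (nonZeroDivisors R) (FractionRing R)) / I :
            FractionalIdeal (nonZeroDivisors R) (FractionRing R)) :
          Submodule R (FractionRing R)) := by
  set T : FractionalIdeal R⁰ (FractionRing R) := (I : FractionalIdeal R⁰ (FractionRing R)) / I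
  set α := algebraMap R (FractionRing R) a
  have hα : α ≠ 0 := by
    rintro hα
    rw [hα, spanSingleton_zero, zero_mul, eq_comm, coeIdeal_eq_zero] at hss
    exact hI hss
  have hT : IsIdempotentElem T := isIdempotentElem_div_self_s8 (coeIdeal_ne_zero.mpr hI)
  have pow_lt_pow_iff := fun {J : Ideal R} {X} ↦
    pow_lt_pow_iff_of_coeIdeal_eq_spanSingleton_mul (J := J) (X := X) hα hT hss.symm
  constructor
  · intro hbig W hW n hn
    let X : FractionalIdeal R⁰ (FractionRing R) := ⟨W, isFractional_of_le hW.le⟩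
    have hXT : X < T := hW
    obtain ⟨J, hJ⟩ : ∃ J : Ideal R, (J : FractionalIdeal R⁰ (FractionRing R)) =
        spanSingleton R⁰ α * X :=
      le_one_iff_exists_coeIdeal.mp <| (mul_le_mul_right hXT.le _).trans <|
        hss.trans_le coeIdeal_le_one
    have hJI : J < I := by simpa using (pow_lt_pow_iff hJ one_ne_zero).mpr (by simpa using hXT)
    exact (pow_lt_pow_iff hJ (by omega)).mp (hbig J hJI n (by omega))
  · intro hcond J hJI n hn
    obtain rfl | hn2 := hn.eq_or_lt
    · simpa using hJI
    set X := spanSingleton R⁰ α⁻¹ * (J : FractionalIdeal R⁰ (FractionRing R))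
    have hJ : (J : FractionalIdeal R⁰ (FractionRing R)) = spanSingleton R⁰ α * X := by
      rw [← mul_assoc, spanSingleton_mul_spanSingleton, mul_inv_cancel₀ hα, spanSingleton_one,
        one_mul]
    have hXT : X < T := by simpa using (pow_lt_pow_iff hJ one_ne_zero).mp (by simpa using hJI)
    exact (pow_lt_pow_iff hJ (by omega)).mpr (hcond X hXT n hn2)

/-- **Proposition 2.13(1).** Let `R` be a domain, `I` a nonzero ideal of `R`,
`T = (I : I)` (as a fractional ideal, `T = I / I`), and assume `I` is strongly stable,
i.e. `I = aT` for some `a ∈ I`.  Then `I` is a big ideal if and only if for every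
`R`-submodule `W` of `T` with `W ⊊ T` one has `Wⁿ ⊊ T` for every `n ≥ 2`. -/
theorem isBig_iff_of_stronglyStable (R : Type*) [CommRing R] [IsDomain R]
    (I : Ideal R) (hI : I ≠ ⊥) (a : R) (ha : a ∈ I)
    (hss : FractionalIdeal.spanSingleton (nonZeroDivisors R)
          (algebraMap R (FractionRing R) a) *
        ((I : FractionalIdeal (nonZeroDivisors R) (FractionRing R)) / I)
      = (I : FractionalIdeal (nonZeroDivisors R) (FractionRing R))) :
    I.IsBig ↔ ∀ W : Submodule R (FractionRing R),
      W < (((I : FractionalIdeal (nonZeroDivisors R) (FractionRing R)) / I :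
          FractionalIdeal (nonZeroDivisors R) (FractionRing R)) :
        Submodule R (FractionRing R)) →
      ∀ n : ℕ, 2 ≤ n →
        W ^ n < (((I : FractionalIdeal (nonZeroDivisors R) (FractionRing R)) / I :
            FractionalIdeal (nonZeroDivisors R) (FractionRing R)) :
          Submodule R (FractionRing R)) :=
  isBig_iff_of_stronglyStable_general R I hI a hss
end

section
/- Let T be an integral domain, M a maximal ideal of T, K = T/M, φ : T → K the canonical surjection, D a proper subring of K, and R = φ⁻¹(D). If R is a big ideal domain, then both D and T are big ideal domains. -/
section AuxBig

variable {T : Type*} [CommRing T]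

/-- The "scaled" ideal `cI` of a `T`-ideal `I`, viewed inside a subring `R'` of `T`
(meaningful when `c * T ⊆ R'`). -/
def sclIdeal (R' : Subring T) (c : T) (I : Ideal T) : Ideal ↥R' where
  carrier := {x | ∃ a ∈ I, (x : T) = c * a}
  zero_mem' := ⟨0, I.zero_mem, by simp⟩
  add_mem' := by
    rintro x y ⟨a, ha, hx⟩ ⟨b, hb, hy⟩
    exact ⟨a + b, I.add_mem ha hb, by push_cast; rw [hx, hy]; ring⟩
  smul_mem' := by
    rintro r x ⟨a, ha, hx⟩
    refine ⟨(r : T) * a, I.mul_mem_left _ ha, ?_⟩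
    have : ((r • x : ↥R') : T) = (r : T) * (x : T) := rfl
    rw [this, hx]; ring

lemma mem_sclIdeal {R' : Subring T} {c : T} {I : Ideal T} {x : ↥R'} :
    x ∈ sclIdeal R' c I ↔ ∃ a ∈ I, (x : T) = c * a := Iff.rfl

lemma sclIdeal_mul {R' : Subring T} {c c' : T} (hc : ∀ t : T, c * t ∈ R')
    (hc' : ∀ t : T, c' * t ∈ R') (I I' : Ideal T) :
    sclIdeal R' c I * sclIdeal R' c' I' = sclIdeal R' (c * c') (I * I') := by
  apply le_antisymm
  · refine Ideal.mul_le.mpr ?_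
    rintro x hx y hy
    obtain ⟨a, ha, hxa⟩ := hx
    obtain ⟨b, hb, hyb⟩ := hy
    refine ⟨a * b, Ideal.mul_mem_mul ha hb, ?_⟩
    have : ((x * y : ↥R') : T) = (x : T) * (y : T) := rfl
    rw [this, hxa, hyb]; ring
  · rintro x ⟨a, ha, hx⟩
    have key : ∀ a ∈ I * I', ∀ x : ↥R', (x : T) = c * c' * a →
        x ∈ sclIdeal R' c I * sclIdeal R' c' I' := by
      intro a ha
      refine Submodule.mul_induction_on ha ?_ ?_
      · intro i hi j hj x hx
        have h1 : (⟨c * i, hc i⟩ : ↥R') ∈ sclIdeal R' c I := ⟨i, hi, rfl⟩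
        have h2 : (⟨c' * j, hc' j⟩ : ↥R') ∈ sclIdeal R' c' I' := ⟨j, hj, rfl⟩
        have := Ideal.mul_mem_mul h1 h2
        have hxeq : x = (⟨c * i, hc i⟩ : ↥R') * ⟨c' * j, hc' j⟩ := by
          apply Subtype.ext
          have : (((⟨c * i, hc i⟩ : ↥R') * ⟨c' * j, hc' j⟩ : ↥R') : T)
              = (c * i) * (c' * j) := rfl
          rw [this, hx]; ring
        rw [hxeq]; exact this
      · intro a₁ a₂ ih1 ih2 x hx
        have hm1 : c * c' * a₁ ∈ R' := by
          have : c * c' * a₁ = c * (c' * a₁) := by ring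
          rw [this]; exact hc _
        have hm2 : c * c' * a₂ ∈ R' := by
          have : c * c' * a₂ = c * (c' * a₂) := by ring
          rw [this]; exact hc _
        have hxeq : x = (⟨c * c' * a₁, hm1⟩ : ↥R') + ⟨c * c' * a₂, hm2⟩ := by
          apply Subtype.ext
          have : (((⟨c * c' * a₁, hm1⟩ : ↥R') + ⟨c * c' * a₂, hm2⟩ : ↥R') : T)
              = c * c' * a₁ + c * c' * a₂ := rfl
          rw [this, hx]; ring
        rw [hxeq]
        exact Ideal.add_mem _ (ih1 _ rfl) (ih2 _ rfl)
    exact key a ha x hx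

lemma sclIdeal_pow {R' : Subring T} {c : T} (hc : ∀ t : T, c * t ∈ R')
    (I : Ideal T) : ∀ n : ℕ, 1 ≤ n → (sclIdeal R' c I) ^ n = sclIdeal R' (c ^ n) (I ^ n) := by
  have hcpow : ∀ m : ℕ, 1 ≤ m → ∀ t : T, c ^ m * t ∈ R' := by
    intro m hm t
    obtain ⟨k, rfl⟩ := Nat.exists_eq_add_of_le hm
    have : c ^ (1 + k) * t = c * (c ^ k * t) := by ring
    rw [this]; exact hc _
  intro n hn
  induction n, hn using Nat.le_induction with
  | base => simp
  | succ n hn ih =>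
    rw [pow_succ, ih, sclIdeal_mul (hcpow n hn) hc, ← pow_succ, ← pow_succ]

lemma sclIdeal_strictMono {R' : Subring T} {c : T} (hc : ∀ t : T, c * t ∈ R')
    (hc0 : c ≠ 0) [IsDomain T] {I J : Ideal T} (h : J < I) :
    sclIdeal R' c J < sclIdeal R' c I := by
  refine lt_of_le_of_ne ?_ ?_
  · rintro x ⟨a, ha, hx⟩; exact ⟨a, h.le ha, hx⟩
  · intro heq
    obtain ⟨a, haI, haJ⟩ := SetLike.exists_of_lt h
    have hx : (⟨c * a, hc a⟩ : ↥R') ∈ sclIdeal R' c I := ⟨a, haI, rfl⟩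
    rw [← heq] at hx
    obtain ⟨b, hb, hab⟩ := hx
    have : a = b := mul_left_cancel₀ hc0 hab
    exact haJ (this ▸ hb)

lemma lt_of_sclIdeal_lt {R' : Subring T} {c : T} (hc0 : c ≠ 0) [IsDomain T]
    {I J : Ideal T} (hJI : J ≤ I) (h : sclIdeal R' c J < sclIdeal R' c I) : J < I := by
  refine lt_of_le_of_ne hJI fun heq => h.ne (by rw [heq])

/-- Transfer bigness from a subring `R'` with `c * T ⊆ R'`, `c ≠ 0`, to `T`. -/
lemma isBigIdealRing_of_scl [IsDomain T] (R' : Subring T) (c : T) (hc0 : c ≠ 0)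
    (hc : ∀ t : T, c * t ∈ R') (hR : IsBigIdealRing ↥R') : IsBigIdealRing T := by
  intro I J hJI n hn
  have h := hR (sclIdeal R' c I) (sclIdeal R' c J) (sclIdeal_strictMono hc hc0 hJI) n hn
  rw [sclIdeal_pow hc I n hn, sclIdeal_pow hc J n hn] at h
  exact lt_of_sclIdeal_lt (pow_ne_zero n hc0) (Ideal.pow_right_mono hJI.le n) h

lemma pow_ne_bot_of_ne_bot {A : Type*} [CommRing A] [IsDomain A] {I : Ideal A}
    (hI : I ≠ ⊥) : ∀ n : ℕ, I ^ n ≠ ⊥ := by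
  intro n
  induction n with
  | zero =>
    rw [pow_zero, Ideal.one_eq_top]
    intro h
    have h1 : (1 : A) ∈ (⊥ : Ideal A) := h ▸ Submodule.mem_top
    exact one_ne_zero (Ideal.mem_bot.mp h1)
  | succ n ih =>
    rw [pow_succ]
    intro h
    rcases Ideal.mul_eq_bot.mp h with h' | h'
    · exact ih h'
    · exact hI h'

end AuxBig

set_option maxHeartbeats 1000000 in
set_option synthInstance.maxHeartbeats 400000 in
/-- **Theorem 3.1(1).**  Pullback setup: `T` is a domain, `M` a maximal ideal of `T`,
`K = T/M`, `φ : T → K` the canonical surjection, `D` a proper subring of `K` and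
`R = φ⁻¹(D)`.  If `R` is a big ideal domain, then so are `D` and `T`. -/
theorem isBigIdealRing_of_pullback (T : Type*) [CommRing T] [IsDomain T]
    (M : Ideal T) [M.IsMaximal] (D : Subring (T ⧸ M)) (hD : D ≠ ⊤)
    (hR : IsBigIdealRing (D.comap (Ideal.Quotient.mk M))) :
    IsBigIdealRing D ∧ IsBigIdealRing T := by
  have hM : M.IsMaximal := inferInstance
  set R' : Subring T := D.comap (Ideal.Quotient.mk M) with hR'def
  -- membership facts
  have hMR : ∀ x ∈ M, x ∈ R' := by
    intro x hx
    simp only [hR'def, Subring.mem_comap]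
    rw [Ideal.Quotient.eq_zero_iff_mem.mpr hx]
    exact D.zero_mem
  -- the restricted map ψ : R' → D
  set ψ : ↥R' →+* ↥D := RingHom.codRestrict ((Ideal.Quotient.mk M).comp R'.subtype) D
    (fun x => Subring.mem_comap.mp x.2) with hψdef
  have hψval : ∀ x : ↥R', (ψ x : T ⧸ M) = Ideal.Quotient.mk M (x : T) := fun x => rfl
  have hψsurj : Function.Surjective ψ := by
    intro d
    obtain ⟨t, ht⟩ := Ideal.Quotient.mk_surjective (d : T ⧸ M)
    refine ⟨⟨t, Subring.mem_comap.mpr (by rw [ht]; exact d.2)⟩, ?_⟩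
    apply Subtype.ext
    rw [hψval]; exact ht
  have hψzero : ∀ x : ↥R', ψ x = 0 ↔ (x : T) ∈ M := by
    intro x
    rw [← Subtype.coe_inj, hψval]
    exact Ideal.Quotient.eq_zero_iff_mem.trans (by simp)
  -- D is a domain
  haveI : Field (T ⧸ M) := Ideal.Quotient.field M
  haveI : IsDomain ↥D := inferInstance
  constructor
  · -- D is a big ideal ring
    intro I J hJI n hn
    by_cases hJbot : J = ⊥
    · -- J = ⊥ : use that D is a domain
      subst hJbot
      have hIne : I ≠ ⊥ := hJI.ne'
      have h1 : (⊥ : Ideal ↥D) ^ n = ⊥ := by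
        rw [← Ideal.zero_eq_bot, zero_pow (by omega : n ≠ 0)]
      rw [h1]
      exact lt_of_le_of_ne bot_le (Ne.symm (pow_ne_bot_of_ne_bot hIne n))
    · -- J ≠ ⊥, hence I ≠ ⊥
      have hIbot : I ≠ ⊥ := fun h => hJbot (le_bot_iff.mp (h ▸ hJI.le))
      -- key fact: for any nonzero ideal I of D, ker ψ ≤ (comap ψ I)^m for m ≥ 1
      have hker_le : ∀ (I : Ideal ↥D), I ≠ ⊥ → ∀ m : ℕ, 1 ≤ m →
          RingHom.ker ψ ≤ (I.comap ψ) ^ m := by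
        intro I hIb m hm
        -- find x₀ ∈ comap ψ I with (x₀ : T) ∉ M
        obtain ⟨d, hdI, hd0⟩ := Submodule.exists_mem_ne_zero_of_ne_bot hIb
        obtain ⟨x₀, hx₀⟩ := hψsurj d
        have hx₀I : x₀ ∈ I.comap ψ := by
          rw [Ideal.mem_comap, hx₀]; exact hdI
        have hx₀M : (x₀ : T) ∉ M := by
          intro hmem
          exact hd0 (hx₀ ▸ (hψzero x₀).mpr hmem)
        -- M ⊔ (x₀) = ⊤
        have hsup : M ⊔ Ideal.span {(x₀ : T)} = ⊤ := by
          refine hM.out.2 _ (lt_of_le_of_ne le_sup_left ?_)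
          intro h
          exact hx₀M (h ▸ Submodule.mem_sup_right (Ideal.subset_span rfl))
        have h1mem : (1 : T) ∈ M ⊔ Ideal.span {(x₀ : T)} := by
          rw [hsup]; exact Submodule.mem_top
        obtain ⟨mm, hmm, y, hy, hsum⟩ := Submodule.mem_sup.mp h1mem
        obtain ⟨t, ht⟩ := Ideal.mem_span_singleton'.mp hy
        -- ker ψ ≤ ker ψ * comap ψ I
        have hstep : RingHom.ker ψ ≤ RingHom.ker ψ * I.comap ψ := by
          intro z hz
          have hzM : (z : T) ∈ M := (hψzero z).mp (RingHom.mem_ker.mp hz)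
          have hr1mem : (z : T) * t ∈ R' := hMR _ (M.mul_mem_right t hzM)
          set r1 : ↥R' := ⟨(z : T) * t, hr1mem⟩ with hr1
          have hr1ker : r1 ∈ RingHom.ker ψ := (hψzero r1).mpr (M.mul_mem_right t hzM)
          set m' : ↥R' := ⟨mm, hMR mm hmm⟩ with hm'
          have hm'I : m' ∈ I.comap ψ := by
            rw [Ideal.mem_comap, (hψzero m').mpr hmm]; exact I.zero_mem
          have hzeq : z = r1 * x₀ + z * m' := by
            apply Subtype.ext
            have hco : ((r1 * x₀ + z * m' : ↥R') : T)
                = (z : T) * t * (x₀ : T) + (z : T) * mm := rfl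
            rw [hco]
            have : (z : T) = (z : T) * (mm + t * (x₀ : T)) := by
              rw [← ht] at hsum
              rw [hsum, mul_one]
            nth_rewrite 1 [this]
            ring
          rw [hzeq]
          exact Ideal.add_mem _ (Ideal.mul_mem_mul hr1ker hx₀I)
            (Ideal.mul_mem_mul hz hm'I)
        -- induction on m
        induction m, hm using Nat.le_induction with
        | base =>
          rw [pow_one]
          intro z hz
          rw [Ideal.mem_comap, RingHom.mem_ker.mp hz]
          exact I.zero_mem
        | succ m hm ih =>
          rw [pow_succ]
          calc RingHom.ker ψ ≤ RingHom.ker ψ * I.comap ψ := hstep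
            _ ≤ (I.comap ψ) ^ m * I.comap ψ := Ideal.mul_mono ih le_rfl
      -- comap commutes with powers for nonzero ideals
      have hcomap_pow : ∀ (I : Ideal ↥D), I ≠ ⊥ → (I.comap ψ) ^ n = (I ^ n).comap ψ := by
        intro I hIb
        apply le_antisymm
        · rw [← Ideal.map_le_iff_le_comap, Ideal.map_pow,
            Ideal.map_comap_of_surjective ψ hψsurj]
        · intro x hx
          rw [Ideal.mem_comap] at hx
          have hmap : Ideal.map ψ ((I.comap ψ) ^ n) = I ^ n := by
            rw [Ideal.map_pow, Ideal.map_comap_of_surjective ψ hψsurj]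
          rw [← hmap] at hx
          obtain ⟨y, hy, hyx⟩ := (Ideal.mem_map_iff_of_surjective ψ hψsurj).mp hx
          have hxy : x - y ∈ RingHom.ker ψ := by
            rw [RingHom.mem_ker, map_sub, hyx, sub_self]
          have : x - y ∈ (I.comap ψ) ^ n := hker_le I hIb n hn hxy
          have := Ideal.add_mem _ this hy
          rwa [sub_add_cancel] at this
      -- conclude
      have hlt : J.comap ψ < I.comap ψ := by
        refine lt_of_le_of_ne (Ideal.comap_mono hJI.le) ?_
        intro h
        have := congrArg (Ideal.map ψ) h
        rw [Ideal.map_comap_of_surjective ψ hψsurj,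
          Ideal.map_comap_of_surjective ψ hψsurj] at this
        exact hJI.ne this
      have hbig := hR (I.comap ψ) (J.comap ψ) hlt n hn
      rw [hcomap_pow I hIbot, hcomap_pow J hJbot] at hbig
      refine lt_of_le_of_ne (Ideal.pow_right_mono hJI.le n) ?_
      intro h
      exact hbig.ne (by rw [h])
  · -- T is a big ideal ring
    by_cases hMbot : M = ⊥
    · -- T is a field
      intro I J hJI n hn
      have hcoT : IsCoatom M := hM.out
      subst hMbot
      have hItop : I = ⊤ := hcoT.2 I (lt_of_le_of_lt bot_le hJI)
      have hJbot : J = ⊥ := by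
        by_contra h
        have : (⊥ : Ideal T) < J := bot_lt_iff_ne_bot.mpr h
        have := hcoT.2 J this
        rw [this, hItop] at hJI
        exact hJI.ne rfl
      subst hItop; subst hJbot
      rw [Ideal.top_pow, ← Ideal.zero_eq_bot, zero_pow (by omega : n ≠ 0),
        Ideal.zero_eq_bot]
      refine lt_of_le_of_ne bot_le ?_
      intro h
      have h1 : (1 : T) ∈ (⊥ : Ideal T) := h ▸ Submodule.mem_top
      exact one_ne_zero (Ideal.mem_bot.mp h1)
    · -- pick c ∈ M, c ≠ 0
      obtain ⟨c, hcM, hc0⟩ := Submodule.exists_mem_ne_zero_of_ne_bot hMbot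
      exact isBigIdealRing_of_scl R' c hc0
        (fun t => hMR _ (M.mul_mem_right t hcM)) hR
end

section
/- Let A ⊊ B be an extension of integral domains, X an indeterminate, and R = A + X·B[X] (respectively R = A + X·B[[X]]). If R is a big ideal domain, then A is a big ideal domain and B is a field. -/
/-! `A` is a retract of `R` (constants in, constant coefficient out), and bigness passes to
retracts: extension of ideals along the section is injective and commutes with powers.

For `b ≠ 0` the ideals `J = (b⁴X, b³X², bX⁴, X⁵)` and `I = J + (b²X³)` of `R` satisfy
`J² = I²`, because a product of two of these monomials depends only on its degree in `X`.
Bigness forces `b²X³ ∈ J`, and comparing coefficients of `X³` gives `b² ∈ b³B`, so `b` is a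
unit. The polynomial case is transported into `B⟦X⟧` along `B[X] → B⟦X⟧`. -/

namespace Ideal

theorem IsBig.eq_of_pow_eq {R : Type*} [CommRing R] {I J : Ideal R} (hI : I.IsBig)
    (hJI : J ≤ I) {n : ℕ} (hn : 1 ≤ n) (h : J ^ n = I ^ n) : J = I := by
  by_contra hne
  exact (hI J (lt_of_le_of_ne hJI hne) n hn).ne h

theorem map_injective_of_leftInverse {R S : Type*} [Semiring R] [Semiring S] {f : R →+* S}
    {g : S →+* R} (h : Function.LeftInverse g f) : Function.Injective (map f) := by
  intro I J hIJ
  have hgf : g.comp f = RingHom.id R := RingHom.ext h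
  rw [← map_id I, ← map_id J, ← hgf, ← map_map, ← map_map, hIJ]

theorem span_sq_eq_span_insert_sq {R : Type*} [CommRing R] {a b c d e : R}
    (hcc : c * c = a * e) (hca : c * a = b * b) (hcb : c * b = a * d) (hcd : c * d = b * e)
    (hce : c * e = d * d) : span {a, b, d, e} ^ 2 = span (insert c {a, b, d, e}) ^ 2 := by
  set s : Set R := {a, b, d, e}
  refine le_antisymm (pow_right_mono (span_mono (Set.subset_insert c s)) 2) ?_
  rw [sq, sq, span_mul_span', span_le]
  have hs : ∀ x ∈ s, ∀ y ∈ s, x * y ∈ span s * span s := fun x hx y hy =>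
    mul_mem_mul (subset_span hx) (subset_span hy)
  have hc : ∀ y ∈ insert c s, c * y ∈ span s * span s := by
    rintro y (rfl | rfl | rfl | rfl | rfl)
    · rw [hcc]; exact hs _ (by simp [s]) _ (by simp [s])
    · rw [hca]; exact hs _ (by simp [s]) _ (by simp [s])
    · rw [hcb]; exact hs _ (by simp [s]) _ (by simp [s])
    · rw [hcd]; exact hs _ (by simp [s]) _ (by simp [s])
    · rw [hce]; exact hs _ (by simp [s]) _ (by simp [s])
  rintro _ ⟨x, hx, y, hy, rfl⟩
  rcases hx with rfl | hx
  · exact hc y hy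
  rcases hy with rfl | hy
  · simpa only [mul_comm, SetLike.mem_coe] using hc x (Or.inr hx)
  · exact hs x hx y hy

end Ideal

open Ideal

theorem IsBigIdealRing.mem_span_of_mul_eq {R : Type*} [CommRing R] (hR : IsBigIdealRing R)
    {a b c d e : R} (hcc : c * c = a * e) (hca : c * a = b * b) (hcb : c * b = a * d)
    (hcd : c * d = b * e) (hce : c * e = d * d) : c ∈ span {a, b, d, e} := by
  rw [(hR _).eq_of_pow_eq (span_mono (Set.subset_insert c _)) one_le_two
    (span_sq_eq_span_insert_sq hcc hca hcb hcd hce)]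
  exact subset_span (Set.mem_insert c _)

theorem IsBigIdealRing.pow_mul_pow_mem_span {S T : Type*} [CommRing S] [CommRing T]
    {π : S →+* T} {A : Subring T} (hR : IsBigIdealRing (A.comap π)) {s t : S} (ht : π t = 0) :
    s ^ 2 * t ^ 3 ∈ span {s ^ 4 * t, s ^ 3 * t ^ 2, s * t ^ 4, t ^ 5} := by
  have hmem (j k : ℕ) : s ^ j * t ^ (k + 1) ∈ A.comap π := by
    simp [Subring.mem_comap, ht, A.zero_mem]
  let m (j k : ℕ) : A.comap π := ⟨s ^ j * t ^ (k + 1), hmem j k⟩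
  have hmul (j k j' k' : ℕ) : m j k * m j' k' = m (j + j') (k + k' + 1) :=
    Subtype.ext (by simp only [m, Subring.coe_mul]; ring)
  have hm := Ideal.mem_map_of_mem (A.comap π).subtype <|
    hR.mem_span_of_mul_eq (a := m 4 0) (b := m 3 1) (c := m 2 2) (d := m 1 3) (e := m 0 4)
      (by rw [hmul, hmul]) (by rw [hmul, hmul]) (by rw [hmul, hmul]) (by rw [hmul, hmul])
      (by rw [hmul, hmul])
  simpa [map_span, Set.image_insert_eq, m] using hm

theorem Subring.isBigIdealRing_of_comap {S T : Type*} [CommRing S] [CommRing T] {π : S →+* T}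
    {σ : T →+* S} (hσ : Function.LeftInverse π σ) {A : Subring T}
    (hR : IsBigIdealRing (A.comap π)) : IsBigIdealRing A := by
  let ι : A →+* A.comap π := (σ.comp A.subtype).codRestrict _ fun a => by simp [hσ a]
  let ρ : A.comap π →+* A := (π.comp (A.comap π).subtype).codRestrict _ fun r => r.2
  have hρι : Function.LeftInverse ρ ι := fun a => Subtype.ext (hσ a)
  intro I J hJI n hn
  refine lt_of_le_of_ne (pow_right_mono hJI.le n) fun h => ?_
  refine (hR (I.map ι) (J.map ι) ?_ n hn).ne (by rw [← Ideal.map_pow, ← Ideal.map_pow, h])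
  exact (map_mono hJI.le).lt_of_ne ((map_injective_of_leftInverse hρι).ne hJI.ne)

namespace PowerSeries

theorem isUnit_of_C_sq_mul_X_pow_three_mem_span {B : Type*} [CommRing B] [IsDomain B] {b : B}
    (hb : b ≠ 0)
    (h : C b ^ 2 * X ^ 3 ∈ span {C b ^ 4 * X, C b ^ 3 * X ^ 2, C b * X ^ 4, (X : B⟦X⟧) ^ 5}) :
    IsUnit b := by
  have hle : span {C b ^ 4 * X, C b ^ 3 * X ^ 2, C b * X ^ 4, (X : B⟦X⟧) ^ 5} ≤
      span {C b ^ 3 * X, X ^ 4} := by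
    refine span_le.2 ?_
    rintro _ (rfl | rfl | rfl | rfl)
    · exact mem_span_pair.2 ⟨C b, 0, by ring⟩
    · exact mem_span_pair.2 ⟨X, 0, by ring⟩
    · exact mem_span_pair.2 ⟨0, C b, by ring⟩
    · exact mem_span_pair.2 ⟨0, X, by ring⟩
  obtain ⟨f, g, hfg⟩ := mem_span_pair.1 (hle h)
  have h3 := congrArg (coeff 3) hfg
  simp only [← map_pow, ← mul_assoc, map_add, coeff_succ_mul_X, coeff_mul_C, coeff_mul_X_pow',
    Nat.reduceLeDiff, ↓reduceIte, add_zero, tsub_self, coeff_zero_C] at h3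
  have hcancel : b ^ 2 * (b * coeff 2 f) = b ^ 2 * 1 := by linear_combination h3
  exact IsUnit.of_mul_eq_one _ (mul_left_cancel₀ (pow_ne_zero 2 hb) hcancel)

theorem isField_of_isBigIdealRing_comap_constantCoeff {B : Type*} [CommRing B] [IsDomain B]
    {A : Subring B} (hR : IsBigIdealRing (A.comap (constantCoeff (R := B)))) : IsField B :=
  ⟨exists_pair_ne B, mul_comm, fun hb => (isUnit_of_C_sq_mul_X_pow_three_mem_span hb
    (hR.pow_mul_pow_mem_span constantCoeff_X)).exists_right_inv⟩

end PowerSeries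

theorem Polynomial.isField_of_isBigIdealRing_comap_constantCoeff {B : Type*} [CommRing B]
    [IsDomain B] {A : Subring B} (hR : IsBigIdealRing (A.comap (constantCoeff (R := B)))) :
    IsField B := by
  refine ⟨exists_pair_ne B, mul_comm, fun {b} hb => ?_⟩
  have h := mem_map_of_mem coeToPowerSeries.ringHom <|
    hR.pow_mul_pow_mem_span (s := C b) (t := X) (by simp)
  simp only [map_span, Set.image_insert_eq, Set.image_singleton, map_mul, map_pow,
    coeToPowerSeries.ringHom_apply, coe_C, coe_X] at h
  exact (PowerSeries.isUnit_of_C_sq_mul_X_pow_three_mem_span hb h).exists_right_inv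

theorem isBigIdealRing_APlusXBX_general (B : Type*) [CommRing B] [IsDomain B]
    (A : Subring B) :
    (IsBigIdealRing (A.comap (Polynomial.constantCoeff (R := B))) →
      IsBigIdealRing A ∧ IsField B) ∧
    (IsBigIdealRing (A.comap (PowerSeries.constantCoeff (R := B))) →
      IsBigIdealRing A ∧ IsField B) :=
  ⟨fun hR => ⟨Subring.isBigIdealRing_of_comap (σ := Polynomial.C)
      (fun _ => Polynomial.coeff_C_zero) hR,
      Polynomial.isField_of_isBigIdealRing_comap_constantCoeff hR⟩,
    fun hR => ⟨Subring.isBigIdealRing_of_comap (σ := PowerSeries.C)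
      (fun _ => PowerSeries.constantCoeff_C _) hR,
      PowerSeries.isField_of_isBigIdealRing_comap_constantCoeff hR⟩⟩

/-- **Corollary 3.3.**  Let `A ⊊ B` be an extension of integral domains and `X` an
indeterminate.  Let `R = A + X·B[X]` (resp. `R = A + X·B[[X]]`), the ring of polynomials
(resp. power series) over `B` whose constant term lies in `A`.  If `R` is a big ideal
domain, then `A` is a big ideal domain and `B` is a field. -/
theorem isBigIdealRing_APlusXBX (B : Type*) [CommRing B] [IsDomain B]
    (A : Subring B) (hA : A ≠ ⊤) :
    (IsBigIdealRing (A.comap (Polynomial.constantCoeff (R := B))) →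
      IsBigIdealRing A ∧ IsField B) ∧
    (IsBigIdealRing (A.comap (PowerSeries.constantCoeff (R := B))) →
      IsBigIdealRing A ∧ IsField B) :=
  isBigIdealRing_APlusXBX_general B A
end

section
/- Let A be a commutative ring, E a simple A-module, R = A⋉E the trivial ring extension (idealization), and L a nonzero ideal of R. Let I_L = {a ∈ A : (a,e) ∈ L for some e ∈ E} and F_L = {e ∈ E : (a,e) ∈ L for some a ∈ A}. Then L² = (I_L⋉F_L)². -/
open TrivSqZeroExt

/-- An ideal `I` of a commutative ring `R` is an *upper big ideal* if whenever `I ⊊ J`,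
`I ^ n ⊊ J ^ n` for every positive integer `n`. -/
def Ideal.IsUpperBig {R : Type*} [CommRing R] (I : Ideal R) : Prop :=
  ∀ J : Ideal R, I < J → ∀ n : ℕ, 1 ≤ n → I ^ n < J ^ n

variable {A : Type*} [CommRing A] {E : Type*} [AddCommGroup E] [Module A E]
  [Module Aᵐᵒᵖ E] [IsCentralScalar A E]

/-- The idealization `I ⋉ F = {(a, e) : a ∈ I, e ∈ F}` of an ideal `I` of `A` and a
submodule `F` of `E` with `I·E ⊆ F`, as an ideal of the trivial ring extension `A ⋉ E`. -/
def Ideal.idealize (I : Ideal A) (F : Submodule A E)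
    (h : ∀ a ∈ I, ∀ e : E, a • e ∈ F) : Ideal (TrivSqZeroExt A E) where
  carrier := {x | x.fst ∈ I ∧ x.snd ∈ F}
  add_mem' ha hb := ⟨I.add_mem ha.1 hb.1, F.add_mem ha.2 hb.2⟩
  zero_mem' := ⟨I.zero_mem, F.zero_mem⟩
  smul_mem' c x hx := by
    refine ⟨?_, ?_⟩
    · rw [smul_eq_mul, fst_mul]
      exact I.mul_mem_left _ hx.1
    · rw [smul_eq_mul, snd_mul]
      refine F.add_mem (F.smul_mem _ hx.2) ?_
      rw [op_smul_eq_smul]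
      exact h _ hx.1 _

/-- For an ideal `L` of `A ⋉ E`, the ideal `I_L = {a ∈ A : (a, e) ∈ L for some e ∈ E}`
of `A`. -/
def Ideal.fstProj (L : Ideal (TrivSqZeroExt A E)) : Ideal A :=
  (L.restrictScalars A).map (fstHom A A E).toLinearMap

/-- For an ideal `L` of `A ⋉ E`, the submodule `F_L = {e ∈ E : (a, e) ∈ L for some a ∈ A}`
 of `E`. -/
def Ideal.sndProj (L : Ideal (TrivSqZeroExt A E)) : Submodule A E :=
  (L.restrictScalars A).map (sndHom A E)

/-- `I_L · E ⊆ F_L`, so that `I_L ⋉ F_L` is an ideal of `A ⋉ E`. -/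
theorem Ideal.fstProj_smul_mem_sndProj (L : Ideal (TrivSqZeroExt A E)) :
    ∀ a ∈ L.fstProj, ∀ e : E, a • e ∈ L.sndProj := by
  rintro a ha e
  obtain ⟨x, hx, rfl⟩ := ha
  exact ⟨x * inr e, L.mul_mem_right _ hx, by simp⟩


private lemma mem_idealize' {I : Ideal A} {F : Submodule A E}
    {h : ∀ a ∈ I, ∀ e : E, a • e ∈ F} {x : TrivSqZeroExt A E} :
    x ∈ I.idealize F h ↔ x.fst ∈ I ∧ x.snd ∈ F := Iff.rfl

private lemma mem_fstProj' {L : Ideal (TrivSqZeroExt A E)} {a : A} :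
    a ∈ L.fstProj ↔ ∃ x ∈ L, x.fst = a := by
  constructor
  · rintro ⟨x, hx, rfl⟩; exact ⟨x, hx, rfl⟩
  · rintro ⟨x, hx, rfl⟩; exact ⟨x, hx, rfl⟩

private lemma snd_mem_sndProj' {L : Ideal (TrivSqZeroExt A E)} {x : TrivSqZeroExt A E}
    (hx : x ∈ L) : x.snd ∈ L.sndProj := ⟨x, hx, rfl⟩

/-- **Lemma 4.1.**  Let `A` be a commutative ring, `E` a simple `A`-module,
`R = A ⋉ E`, `L` a nonzero ideal of `R`, and `I_L ⋉ F_L` the decomposition of `L`.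
Then `L² = (I_L ⋉ F_L)²`. -/
theorem sq_eq_sq_decomposition_of_isSimpleModule [IsSimpleModule A E]
    (L : Ideal (TrivSqZeroExt A E)) (hL : L ≠ ⊥) :
    L ^ 2 = (L.fstProj.idealize L.sndProj (L.fstProj_smul_mem_sndProj)) ^ 2 := by
  have hle : L ≤ L.fstProj.idealize L.sndProj (L.fstProj_smul_mem_sndProj) :=
    fun x hx => ⟨mem_fstProj'.mpr ⟨x, hx, rfl⟩, snd_mem_sndProj' hx⟩
  rcases eq_bot_or_eq_top (L.sndProj) with hF | hF
  · -- F_L = ⊥ : L = I ⋉ F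
    have heq : L.fstProj.idealize L.sndProj (L.fstProj_smul_mem_sndProj) = L := by
      apply le_antisymm _ hle
      rintro x ⟨ha, he⟩
      obtain ⟨y, hy, hfst⟩ := mem_fstProj'.mp ha
      have hys : y.snd = 0 := by
        have := snd_mem_sndProj' hy; rwa [hF, Submodule.mem_bot] at this
      have hxs : x.snd = 0 := by rwa [hF, Submodule.mem_bot] at he
      have : x = y := TrivSqZeroExt.ext hfst.symm (by rw [hxs, hys])
      rwa [this]
    rw [heq]
  · rcases eq_bot_or_eq_top (L.fstProj • (⊤ : Submodule A E)) with hN | hN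
    · -- I_L • E = ⊥
      have hzero : ∀ a ∈ L.fstProj, ∀ e : E, a • e = (0 : E) := by
        intro a ha e
        have : a • e ∈ L.fstProj • (⊤ : Submodule A E) :=
          Submodule.smul_mem_smul ha Submodule.mem_top
        rwa [hN, Submodule.mem_bot] at this
      rw [pow_two, pow_two]
      apply le_antisymm (Ideal.mul_mono hle hle)
      rw [Ideal.mul_le]
      rintro x hx y hy
      obtain ⟨x', hx', hfx⟩ := mem_fstProj'.mp hx.1
      obtain ⟨y', hy', hfy⟩ := mem_fstProj'.mp hy.1
      have key : x * y = x' * y' := by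
        apply TrivSqZeroExt.ext
        · simp [fst_mul, hfx, hfy]
        · rw [snd_mul, snd_mul, op_smul_eq_smul, op_smul_eq_smul,
            hzero _ hx.1 _, hzero _ hy.1 _, hfx, hfy,
            hzero _ hx.1 _, hzero _ hy.1 _]
      rw [key]
      exact Ideal.mul_mem_mul hx' hy'
    · -- I_L • E = ⊤ : L = I ⋉ F
      have hmem : ∀ m ∈ L.fstProj • (⊤ : Submodule A E), (inr m : TrivSqZeroExt A E) ∈ L := by
        intro m hm
        refine Submodule.smul_induction_on hm ?_ ?_
        · intro a ha n _
          obtain ⟨z, hz, hfz⟩ := mem_fstProj'.mp ha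
          have : z * inr n = inr (a • n) := by
            apply TrivSqZeroExt.ext
            · simp
            · rw [snd_mul]; simp [hfz]
          rw [← this]
          exact L.mul_mem_right _ hz
        · intro m₁ m₂ h₁ h₂
          have := L.add_mem h₁ h₂
          rwa [← inr_add] at this
      have heq : L.fstProj.idealize L.sndProj (L.fstProj_smul_mem_sndProj) = L := by
        apply le_antisymm _ hle
        rintro x ⟨ha, _⟩
        obtain ⟨y, hy, hfst⟩ := mem_fstProj'.mp ha
        have hx : x = y + inr (x.snd - y.snd) := by
          apply TrivSqZeroExt.ext
          · simp [hfst]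
          · simp
        rw [hx]
        exact L.add_mem hy (hmem _ (by rw [hN]; trivial))
      rw [heq]
end

section
/- Let A be an integral domain, E a divisible A-module, and R = A⋉E. Then every non-nilpotent ideal of R is a big ideal of R if and only if A is a big ideal domain. -/
open TrivSqZeroExt

variable {A : Type*} [CommRing A] {E : Type*} [AddCommGroup E] [Module A E]
  [Module Aᵐᵒᵖ E] [IsCentralScalar A E]

/-!
Over a domain `A` with `E` divisible, an ideal `L` of `A ⋉ E` either has zero image in `A`, and
then lies in the square-zero ideal `0 ⋉ E`, or contains all of `0 ⋉ E`: if `(a, e) ∈ L` with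
`a ≠ 0`, then `(a, e)(0, f) = (0, a f)` and `a E = E`. In the second case `L = I ⋉ E` for its image
`I` in `A`. So the non-nilpotent ideals of `A ⋉ E` are exactly the `I ⋉ E` with `I ≠ 0`, they are
determined by their images in `A`, and taking images commutes with powers; hence strict inclusions
of powers can be compared in `A`.
-/

theorem Ideal.isBig_bot {R : Type*} [CommRing R] : (⊥ : Ideal R).IsBig :=
  fun _ hJ => absurd hJ not_lt_bot

namespace TrivSqZeroExt

theorem fstHom_surjective : Function.Surjective (fstHom A A E) :=
  fst_surjective

theorem sq_eq_bot_of_map_fstHom_eq_bot {L : Ideal (TrivSqZeroExt A E)}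
    (hL : L.map (fstHom A A E) = ⊥) : L ^ 2 = ⊥ :=
  le_bot_iff.mp <| kerIdeal_sq A E ▸ Ideal.pow_right_mono (Ideal.map_eq_bot_iff_le_ker _ |>.mp hL) 2

theorem forall_pow_ne_bot_iff_map_fstHom_ne_bot [IsDomain A] (L : Ideal (TrivSqZeroExt A E)) :
    (∀ n : ℕ, 1 ≤ n → L ^ n ≠ ⊥) ↔ L.map (fstHom A A E) ≠ ⊥ := by
  refine ⟨fun h hL => h 2 one_le_two (sq_eq_bot_of_map_fstHom_eq_bot hL), fun hL n _ hLn => ?_⟩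
  have := congrArg (Ideal.map (fstHom A A E)) hLn
  rw [Ideal.map_pow, Ideal.map_bot] at this
  exact pow_ne_zero n hL this

theorem kerIdeal_le_of_map_fstHom_ne_bot (hdiv : ∀ a : A, a ≠ 0 → ∀ e : E, ∃ f : E, a • f = e)
    {L : Ideal (TrivSqZeroExt A E)} (hL : L.map (fstHom A A E) ≠ ⊥) : kerIdeal A E ≤ L := by
  obtain ⟨a, haL, ha⟩ := Submodule.exists_mem_ne_zero_of_ne_bot hL
  obtain ⟨x, hx, rfl⟩ := (Ideal.mem_map_iff_of_surjective _ fstHom_surjective).mp haL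
  intro y hy
  obtain ⟨f, hf⟩ := hdiv _ ha y.snd
  have hxf : x * inr f = y := by
    rw [(mem_kerIdeal_iff_inr A E y).mp hy, ← hf]
    ext <;> simp
  exact hxf ▸ L.mul_mem_right _ hx

theorem comap_map_fstHom_eq (hdiv : ∀ a : A, a ≠ 0 → ∀ e : E, ∃ f : E, a • f = e)
    {L : Ideal (TrivSqZeroExt A E)} (hL : L.map (fstHom A A E) ≠ ⊥) :
    (L.map (fstHom A A E)).comap (fstHom A A E) = L := by
  rw [Ideal.comap_map_of_surjective' (fstHom A A E) fstHom_surjective, sup_eq_left]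
  exact kerIdeal_le_of_map_fstHom_ne_bot hdiv hL

theorem eq_of_map_fstHom_eq (hdiv : ∀ a : A, a ≠ 0 → ∀ e : E, ∃ f : E, a • f = e)
    {L M : Ideal (TrivSqZeroExt A E)} (hL : L.map (fstHom A A E) ≠ ⊥)
    (h : L.map (fstHom A A E) = M.map (fstHom A A E)) : L = M := by
  rw [← comap_map_fstHom_eq hdiv hL, h, comap_map_fstHom_eq hdiv (h ▸ hL)]

theorem isBig_of_isBig_map_fstHom [IsDomain A]
    (hdiv : ∀ a : A, a ≠ 0 → ∀ e : E, ∃ f : E, a • f = e)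
    {L : Ideal (TrivSqZeroExt A E)} (hL : L.map (fstHom A A E) ≠ ⊥)
    (h : (L.map (fstHom A A E)).IsBig) : L.IsBig := by
  intro M hML n hn
  refine lt_of_le_of_ne (Ideal.pow_right_mono hML.le n) fun hMLn => ?_
  have hmap : M.map (fstHom A A E) ^ n = L.map (fstHom A A E) ^ n := by
    rw [← Ideal.map_pow, ← Ideal.map_pow, hMLn]
  have hM : M.map (fstHom A A E) ≠ ⊥ := by
    rintro hM
    rw [hM, ← Ideal.zero_eq_bot, zero_pow (by omega)] at hmap
    exact pow_ne_zero n hL hmap.symm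
  have hlt : M.map (fstHom A A E) < L.map (fstHom A A E) :=
    lt_of_le_of_ne (Ideal.map_mono hML.le) fun h => hML.ne (eq_of_map_fstHom_eq hdiv hM h)
  exact (h _ hlt n hn).ne hmap

theorem isBig_of_isBig_comap_fstHom [IsDomain A]
    (hdiv : ∀ a : A, a ≠ 0 → ∀ e : E, ∃ f : E, a • f = e)
    {I : Ideal A} (h : (I.comap (fstHom A A E)).IsBig) : I.IsBig := by
  intro J hJI n hn
  refine lt_of_le_of_ne (Ideal.pow_right_mono hJI.le n) fun hJIn => ?_
  have hmap (K : Ideal A) : ((K.comap (fstHom A A E)) ^ n).map (fstHom A A E) = K ^ n := by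
    rw [Ideal.map_pow, Ideal.map_comap_of_surjective _ fstHom_surjective]
  have hJn : J ^ n ≠ ⊥ := hJIn ▸ pow_ne_zero n (ne_bot_of_gt hJI)
  have hcomap : J.comap (fstHom A A E) < I.comap (fstHom A A E) :=
    (Ideal.orderEmbeddingOfSurjective _ fstHom_surjective).strictMono hJI
  refine (h _ hcomap n hn).ne (eq_of_map_fstHom_eq hdiv ?_ ?_)
  · rwa [hmap]
  · rw [hmap, hmap, hJIn]

end TrivSqZeroExt

/-- **Theorem 4.2(2).**  Let `A` be an integral domain, `E` a divisible `A`-module and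
`R = A ⋉ E`.  Then every non-nilpotent ideal of `R` is a big ideal if and only if
`A` is a big ideal domain. -/
theorem forall_nonNilpotent_isBig_iff_isBigIdealRing [IsDomain A]
    (hdiv : ∀ a : A, a ≠ 0 → ∀ e : E, ∃ f : E, a • f = e) :
    (∀ L : Ideal (TrivSqZeroExt A E), (∀ n : ℕ, 1 ≤ n → L ^ n ≠ ⊥) → L.IsBig) ↔
      IsBigIdealRing A := by
  simp_rw [forall_pow_ne_bot_iff_map_fstHom_ne_bot]
  refine ⟨fun H I => ?_, fun H L hL => isBig_of_isBig_map_fstHom hdiv hL (H _)⟩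
  rcases eq_or_ne I ⊥ with rfl | hI
  · exact Ideal.isBig_bot
  · refine isBig_of_isBig_comap_fstHom hdiv (H _ ?_)
    rwa [Ideal.map_comap_of_surjective _ (fstHom_surjective (E := E))]
end

section
/- Let A be a commutative ring, E an A-module, R = A⋉E, and I an ideal of A. Then I⋉E is an upper big ideal of R if and only if I is an upper big ideal of A. -/
open TrivSqZeroExt

variable {A : Type*} [CommRing A] {E : Type*} [AddCommGroup E] [Module A E]
  [Module Aᵐᵒᵖ E] [IsCentralScalar A E]

/-- If `I ≤ J` and `I ^ n = J ^ n` for some `n ≥ 1`, then `I ^ (n+1) = J ^ (n+1)`. -/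
theorem aux_pow_succ_eq {B : Type*} [CommRing B] {I J : Ideal B} (hIJ : I ≤ J)
    {n : ℕ} (hn : 1 ≤ n) (h : I ^ n = J ^ n) : I ^ (n + 1) = J ^ (n + 1) := by
  obtain ⟨m, rfl⟩ : ∃ m, n = m + 1 := ⟨n - 1, (Nat.succ_pred_eq_of_pos hn).symm⟩
  have key : I ^ m * J ≤ I ^ (m + 1) := by
    calc I ^ m * J ≤ J ^ m * J := Ideal.mul_mono (Ideal.pow_right_mono hIJ m) le_rfl
    _ = J ^ (m + 1) := (pow_succ J m).symm
    _ = I ^ (m + 1) := h.symm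
  refine le_antisymm (Ideal.pow_right_mono hIJ _) ?_
  calc J ^ (m + 1 + 1) = J ^ (m + 1) * J := pow_succ J (m + 1)
  _ = I ^ (m + 1) * J := by rw [h]
  _ = (I ^ m * J) * I := by rw [pow_succ]; ring
  _ ≤ I ^ (m + 1) * I := Ideal.mul_mono key le_rfl
  _ = I ^ (m + 1 + 1) := (pow_succ I (m + 1)).symm

/-- Binomial-type bound for powers of a sup with a square-zero ideal. -/
theorem aux_sup_pow_le {B : Type*} [CommRing B] {X N : Ideal B} (hN : N * N = ⊥) :
    ∀ n : ℕ, (X ⊔ N) ^ (n + 1) ≤ X ^ (n + 1) ⊔ X ^ n * N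
  | 0 => by simp
  | (k + 1) => by
    calc (X ⊔ N) ^ (k + 1 + 1) = (X ⊔ N) ^ (k + 1) * (X ⊔ N) := pow_succ _ _
    _ ≤ (X ^ (k + 1) ⊔ X ^ k * N) * (X ⊔ N) :=
        Ideal.mul_mono (aux_sup_pow_le hN k) le_rfl
    _ ≤ X ^ (k + 1 + 1) ⊔ X ^ (k + 1) * N := by
        rw [Ideal.sup_mul, Ideal.mul_sup, Ideal.mul_sup]
        refine sup_le (sup_le ?_ le_sup_right) (sup_le ?_ ?_)
        · exact le_sup_of_le_left (pow_succ X (k + 1) ▸ le_rfl)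
        · refine le_sup_of_le_right (le_of_eq ?_)
          rw [pow_succ]; ring
        · calc X ^ k * N * N = X ^ k * (N * N) := mul_assoc _ _ _
          _ = ⊥ := by rw [hN, Ideal.mul_bot]
          _ ≤ _ := bot_le

/-- Decomposition of the idealization `J ⋉ E` as a sup. -/
theorem aux_comap_eq_sup (J : Ideal A) :
    J.comap (fstHom A A E) = J.map (inlHom A E) ⊔ RingHom.ker (fstHom A A E) := by
  refine le_antisymm ?_ (sup_le ?_ ?_)
  · intro x hx
    rw [Ideal.mem_comap, fstHom_apply] at hx
    rw [← inl_fst_add_inr_snd_eq x]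
    refine Submodule.add_mem_sup (Ideal.mem_map_of_mem _ hx) ?_
    rw [RingHom.mem_ker, fstHom_apply, fst_inr]
  · rw [Ideal.map_le_iff_le_comap]
    intro a ha
    rw [Ideal.mem_comap, Ideal.mem_comap, inlHom_apply, fstHom_apply, fst_inl]
    exact ha
  · intro x hx
    rw [RingHom.mem_ker] at hx
    rw [Ideal.mem_comap, hx]
    exact J.zero_mem

theorem aux_ker_sq :
    RingHom.ker (fstHom A A E) * RingHom.ker (fstHom A A E) = ⊥ := by
  refine le_antisymm (Ideal.mul_le.2 fun x hx y hy => ?_) bot_le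
  rw [RingHom.mem_ker, fstHom_apply] at hx hy
  rw [Ideal.mem_bot]
  refine TrivSqZeroExt.ext ?_ ?_
  · rw [fst_mul, hx, zero_mul, fst_zero]
  · rw [snd_mul, hx, hy, snd_zero, MulOpposite.op_zero, zero_smul, zero_smul, zero_add]

/-- Comparison of powers of sups with a square-zero ideal. -/
theorem aux_sup_pow_eq {B : Type*} [CommRing B] {M1 M2 N : Ideal B} (hN : N * N = ⊥) {n : ℕ}
    (e1 : M1 ^ (n + 1) = M2 ^ (n + 1)) (e2 : M1 ^ n * N = M2 ^ n * N) :
    (M2 ⊔ N) ^ (n + 1) ≤ (M1 ⊔ N) ^ (n + 1) := by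
  calc (M2 ⊔ N) ^ (n + 1) ≤ M2 ^ (n + 1) ⊔ M2 ^ n * N := aux_sup_pow_le hN n
  _ = M1 ^ (n + 1) ⊔ M1 ^ n * N := by rw [e1, e2]
  _ ≤ (M1 ⊔ N) ^ (n + 1) := by
      refine sup_le (Ideal.pow_right_mono le_sup_left _) ?_
      calc M1 ^ n * N ≤ (M1 ⊔ N) ^ n * (M1 ⊔ N) :=
            Ideal.mul_mono (Ideal.pow_right_mono le_sup_left n) le_sup_right
      _ = (M1 ⊔ N) ^ (n + 1) := (pow_succ _ _).symm

set_option maxHeartbeats 2000000 in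
/-- Key comparison: if `I ≤ J`, `I ^ n = J ^ n` and `I ^ (n+1) = J ^ (n+1)`, then the
idealizations `I ⋉ E` and `J ⋉ E` have equal `(n+1)`-st powers. -/
theorem aux_comap_pow_eq {I J : Ideal A} (_hIJ : I ≤ J) {n : ℕ}
    (h1 : I ^ n = J ^ n) (h2 : I ^ (n + 1) = J ^ (n + 1)) :
    (I.comap (fstHom A A E)) ^ (n + 1) = (J.comap (fstHom A A E)) ^ (n + 1) := by
  have e1 : (I.map (inlHom A E)) ^ (n + 1) = (J.map (inlHom A E)) ^ (n + 1) := by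
    rw [← Ideal.map_pow, ← Ideal.map_pow, h2]
  have e0 : (I.map (inlHom A E)) ^ n = (J.map (inlHom A E)) ^ n := by
    rw [← Ideal.map_pow, ← Ideal.map_pow, h1]
  have e2 : (I.map (inlHom A E)) ^ n * RingHom.ker (fstHom A A E)
      = (J.map (inlHom A E)) ^ n * RingHom.ker (fstHom A A E) := by rw [e0]
  rw [aux_comap_eq_sup I, aux_comap_eq_sup J]
  exact le_antisymm
    (aux_sup_pow_eq (M1 := J.map (inlHom A E)) (M2 := I.map (inlHom A E))
      (N := RingHom.ker (fstHom A A E)) aux_ker_sq e1.symm e2.symm)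
    (aux_sup_pow_eq (M1 := I.map (inlHom A E)) (M2 := J.map (inlHom A E))
      (N := RingHom.ker (fstHom A A E)) aux_ker_sq e1 e2)

/-- **Theorem 4.2(4).**  Let `A` be a commutative ring, `E` an `A`-module,
`R = A ⋉ E` and `I` an ideal of `A`.  Then `I ⋉ E` (the preimage of `I` under the first
projection) is an upper big ideal of `R` if and only if `I` is an upper big ideal of `A`. -/
theorem idealize_top_isUpperBig_iff (I : Ideal A) :
    (I.comap (fstHom A A E)).IsUpperBig ↔ I.IsUpperBig := by
  have hsurj : Function.Surjective ⇑(fstHom A A E) := fun a => ⟨inl a, fst_inl E a⟩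
  have hker : ∀ J : Ideal A, RingHom.ker (fstHom A A E) ≤ J.comap (fstHom A A E) := by
    intro J x hx
    rw [RingHom.mem_ker] at hx
    rw [Ideal.mem_comap, hx]
    exact J.zero_mem
  have hmc : ∀ J : Ideal A, (J.comap (fstHom A A E)).map (fstHom A A E) = J := fun J =>
    Ideal.map_comap_of_surjective _ hsurj J
  constructor
  · -- hard direction: `I ⋉ E` upper big implies `I` upper big
    intro hK J hIJ n hn
    have hKL : I.comap (fstHom A A E) < J.comap (fstHom A A E) := by
      refine lt_of_le_of_ne (Ideal.comap_mono hIJ.le) fun h => ?_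
      have := congrArg (Ideal.map (fstHom A A E)) h
      rw [hmc, hmc] at this
      exact hIJ.ne this
    refine lt_of_le_of_ne (Ideal.pow_right_mono hIJ.le n) fun h => ?_
    have h2 : I ^ (n + 1) = J ^ (n + 1) := aux_pow_succ_eq hIJ.le hn h
    have heq := aux_comap_pow_eq (E := E) hIJ.le h h2
    exact (hK _ hKL (n + 1) (by omega)).ne heq
  · -- easy direction: `I` upper big implies `I ⋉ E` upper big
    intro hI L hKL n hn
    have hkerL : RingHom.ker (fstHom A A E) ≤ L := (hker I).trans hKL.le
    have hLeq : L = (L.map (fstHom A A E)).comap (fstHom A A E) := by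
      rw [Ideal.comap_map_of_surjective' _ hsurj L, sup_eq_left.2 hkerL]
    have hIJ : I < L.map (fstHom A A E) := by
      refine lt_of_le_of_ne ?_ fun h => ?_
      · conv_lhs => rw [← hmc I]
        exact Ideal.map_mono hKL.le
      · have : L = I.comap (fstHom A A E) := by rw [hLeq, ← h]
        exact hKL.ne this.symm
    refine lt_of_le_of_ne (Ideal.pow_right_mono hKL.le n) fun h => ?_
    have := congrArg (Ideal.map (fstHom A A E)) h
    rw [Ideal.map_pow, Ideal.map_pow, hmc] at this
    exact (hI _ hIJ n hn).ne this
end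

section
/- Let A be a commutative ring, M a maximal ideal of A, E an A-module with ME = 0, R = A⋉E, and I an ideal of A with I ⊄ M. Then I⋉E is a big ideal of R if and only if I is a big ideal of A. -/
open TrivSqZeroExt

variable {A : Type*} [CommRing A] {E : Type*} [AddCommGroup E] [Module A E]
  [Module Aᵐᵒᵖ E] [IsCentralScalar A E]

section helpers

variable {A : Type*} [CommRing A] {E : Type*} [AddCommGroup E] [Module A E]
  [Module Aᵐᵒᵖ E] [IsCentralScalar A E]

lemma exists_smul_id' {M : Ideal A} [hM : M.IsMaximal] (hME : ∀ m ∈ M, ∀ e : E, m • e = 0)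
    {J : Ideal A} (hJ : ¬ J ≤ M) : ∃ j ∈ J, ∀ e : E, j • e = e := by
  have htop : M ⊔ J = ⊤ := hM.out.2 _ (left_lt_sup.mpr hJ)
  have h1 : (1 : A) ∈ M ⊔ J := htop ▸ Submodule.mem_top
  obtain ⟨m, hm, j, hj, hmj⟩ := Submodule.mem_sup.mp h1
  refine ⟨j, hj, fun e => ?_⟩
  have : (m + j) • e = e := by rw [hmj, one_smul]
  rwa [add_smul, hME m hm e, zero_add] at this

lemma inl_mem_pow' {K : Ideal (TrivSqZeroExt A E)} {J : Ideal A}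
    (hJK : ∀ a ∈ J, (inl a : TrivSqZeroExt A E) ∈ K) {n : ℕ} {a : A} (ha : a ∈ J ^ n) :
    (inl a : TrivSqZeroExt A E) ∈ K ^ n := by
  have hmap : Ideal.map (inlHom A E) J ≤ K :=
    Ideal.map_le_iff_le_comap.mpr fun x hx => hJK x hx
  have : (inl a : TrivSqZeroExt A E) ∈ Ideal.map (inlHom A E) (J ^ n) :=
    Ideal.mem_map_of_mem _ ha
  rw [Ideal.map_pow] at this
  exact Ideal.pow_right_mono hmap n this

lemma fst_mem_pow' {K : Ideal (TrivSqZeroExt A E)} {n : ℕ} {x : TrivSqZeroExt A E}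
    (hx : x ∈ K ^ n) : x.fst ∈ (Ideal.map (fstHom A A E) K) ^ n := by
  rw [← Ideal.map_pow]
  exact Ideal.mem_map_of_mem _ hx

lemma inr_mem_pow' {K : Ideal (TrivSqZeroExt A E)} {j : A}
    (hj : (inl j : TrivSqZeroExt A E) ∈ K) (hje : ∀ e : E, j • e = e)
    {e : E} (he : (inr e : TrivSqZeroExt A E) ∈ K) {n : ℕ} (hn : 1 ≤ n) :
    (inr e : TrivSqZeroExt A E) ∈ K ^ n := by
  obtain ⟨k, rfl⟩ := Nat.exists_eq_add_of_le hn
  have hjk : ∀ k : ℕ, (j ^ k : A) • e = e := by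
    intro k
    induction k with
    | zero => simp
    | succ k ih => rw [pow_succ, mul_comm, mul_smul, ih, hje]
  have key : (inr e : TrivSqZeroExt A E) = (inl j : TrivSqZeroExt A E) ^ k * inr e := by
    rw [inl_pow, inl_mul_inr, hjk]
  rw [key, add_comm 1 k, pow_add, pow_one]
  exact Ideal.mul_mem_mul (Ideal.pow_mem_pow hj k) he

end helpers

/-- **Theorem 4.4(2).**  Let `A` be a commutative ring, `M` a maximal ideal of `A`,
`E` an `A`-module with `M·E = 0`, `R = A ⋉ E` and `I` an ideal of `A` with `I ⊄ M`.
Then `I ⋉ E` (the preimage of `I` under the first projection) is a big ideal of `R`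
if and only if `I` is a big ideal of `A`. -/
theorem idealize_top_isBig_iff_of_not_le (M : Ideal A) [M.IsMaximal]
    (hME : ∀ m ∈ M, ∀ e : E, m • e = 0) (I : Ideal A) (hI : ¬ I ≤ M) :
    (I.comap (fstHom A A E)).IsBig ↔ I.IsBig := by
  obtain ⟨i, hiI, hie⟩ := exists_smul_id' hME hI
  constructor
  · -- L big → I big
    intro hL J hJ n hn
    refine lt_of_le_of_ne (Ideal.pow_right_mono hJ.le n) fun heq => ?_
    have hJM : ¬ J ≤ M := by
      intro hle
      apply hI
      refine Ideal.IsPrime.le_of_pow_le (P := M) (n := n) ?_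
      rw [← heq]
      exact le_trans (Ideal.pow_le_self (by omega)) hle
    obtain ⟨j, hjJ, hje⟩ := exists_smul_id' hME hJM
    set L := I.comap (fstHom A A E) with hLdef
    set K := J.comap (fstHom A A E) with hKdef
    have hKL : K < L := by
      refine lt_of_le_of_ne (Ideal.comap_mono hJ.le) fun hKeq => ?_
      obtain ⟨a, haI, haJ⟩ := SetLike.exists_of_lt hJ
      have h1 : (inl a : TrivSqZeroExt A E) ∈ L := by simpa [hLdef, Ideal.mem_comap] using haI
      rw [← hKeq] at h1
      exact haJ (by simpa [hKdef, Ideal.mem_comap] using h1)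
    have hpow := hL K hKL n hn
    refine absurd (?_ : L ^ n ≤ K ^ n) hpow.not_ge
    intro x hx
    have hfst : x.fst ∈ I ^ n := by
      have h1 : x.fst ∈ (Ideal.map (fstHom A A E) L) ^ n := fst_mem_pow' hx
      have h2 : Ideal.map (fstHom A A E) L ≤ I := Ideal.map_comap_le
      exact Ideal.pow_right_mono h2 n h1
    rw [← heq] at hfst
    have h3 : (inl x.fst : TrivSqZeroExt A E) ∈ K ^ n :=
      inl_mem_pow' (fun a ha => by simpa [hKdef, Ideal.mem_comap] using ha) hfst
    have h4 : (inr x.snd : TrivSqZeroExt A E) ∈ K ^ n := by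
      refine inr_mem_pow' (by simpa [hKdef, Ideal.mem_comap] using hjJ) hje ?_ hn
      simp [hKdef, Ideal.mem_comap]
    have := Ideal.add_mem _ h3 h4
    rwa [inl_fst_add_inr_snd_eq] at this
  · -- I big → L big
    intro hIb K hK n hn
    set L := I.comap (fstHom A A E) with hLdef
    set J := Ideal.map (fstHom A A E) K with hJdef
    have hJI : J < I := by
      have hle : J ≤ I := Ideal.map_le_iff_le_comap.mpr hK.le
      refine lt_of_le_of_ne hle fun hJeq => ?_
      apply hK.ne
      refine le_antisymm hK.le fun x hx => ?_
      have hfstsurj : Function.Surjective (fstHom A A E) := fun a => ⟨inl a, rfl⟩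
      have hx' : x.fst ∈ J := hJeq ▸ hx
      obtain ⟨y, hyK, hyx⟩ := (Ideal.mem_map_iff_of_surjective _ hfstsurj).mp hx'
      have hiJ : i ∈ J := hJeq ▸ hiI
      obtain ⟨z, hzK, hzi⟩ := (Ideal.mem_map_iff_of_surjective _ hfstsurj).mp hiJ
      have hinr : ∀ f : E, (inr f : TrivSqZeroExt A E) ∈ K := by
        intro f
        have : z * inr f = (inr f : TrivSqZeroExt A E) := by
          ext
          · simp
          · show (z * inr f).snd = f
            rw [snd_mul]
            have hz : z.fst = i := hzi
            simp [hz, hie]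
        exact this ▸ Ideal.mul_mem_right _ _ hzK
      have hy : y.fst = x.fst := hyx
      have : x = y + inr (x.snd - y.snd) := by
        ext
        · simp [hy]
        · simp
      rw [this]
      exact Ideal.add_mem _ hyK (hinr _)
    have hpow := hIb J hJI n hn
    refine lt_of_le_of_ne (Ideal.pow_right_mono hK.le n) fun heq => ?_
    obtain ⟨a, haI, haJ⟩ := SetLike.exists_of_lt hpow
    apply haJ
    have h1 : (inl a : TrivSqZeroExt A E) ∈ L ^ n :=
      inl_mem_pow' (fun b hb => by simpa [hLdef, Ideal.mem_comap] using hb) haI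
    rw [← heq] at h1
    simpa using fst_mem_pow' h1
end
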